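/- arXiv:0801.0496 — 5 statements merged into one kernel-verified Lean document; each statement's English description precedes it below -/
import Mathlib

section
/- Let m > 0 and σ > 0, and set v = σ²/(2m). Suppose μ is a probability measure on ℝ such that for every t > 0, the pushforward of μ under x ↦ e^{−mt} x, convolved with the Gaussian measure N(0, v·(1 − e^{−2mt})), equals μ. Then μ = N(0, v). -/
open MeasureTheory ProbabilityTheory Filter Topology
open scoped NNReal ENNReal

/-- Uniqueness of the invariant measure of the scalar Ornstein–Uhlenbeck equation
`dz + m z dt = σ dβ`: if a probability measure `μ` on `ℝ` is invariant under the
transition semigroup `μ ↦ (map (x ↦ e^{-mt} x) μ) ∗ N(0, v(1 - e^{-2mt}))` for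
every `t > 0`, where `v = σ²/(2m)`, then `μ = N(0, v)`. -/
theorem OU_invariant_measure_unique (m σ : ℝ) (hm : 0 < m) (hσ : 0 < σ)
    (v : ℝ≥0) (hv : (v : ℝ) = σ ^ 2 / (2 * m))
    (μ : Measure ℝ) [IsProbabilityMeasure μ]
    (hinv : ∀ t : ℝ, 0 < t →
      (Measure.map (fun x : ℝ => Real.exp (-m * t) * x) μ).conv
        (gaussianReal 0 (v * Real.toNNReal (1 - Real.exp (-(2 * m * t))))) = μ) :
    μ = gaussianReal 0 v := by
  set ν := gaussianReal 0 v with hν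
  -- the scaling coefficients
  set a : ℕ → ℝ := fun n => Real.exp (-m * ((n : ℝ) + 1)) with ha
  set c : ℕ → ℝ := fun n => Real.sqrt (1 - Real.exp (-(2 * m * ((n : ℝ) + 1)))) with hc
  have hpos : ∀ n : ℕ, (0 : ℝ) < (n : ℝ) + 1 := fun n => by positivity
  have hlt1 : ∀ n : ℕ, Real.exp (-(2 * m * ((n : ℝ) + 1))) < 1 := by
    intro n
    rw [Real.exp_lt_one_iff]
    have := hpos n
    nlinarith
  -- the gaussian factor as a scaled copy of ν
  have hgauss : ∀ n : ℕ,
      gaussianReal 0 (v * Real.toNNReal (1 - Real.exp (-(2 * m * ((n : ℝ) + 1)))))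
        = ν.map (c n * ·) := by
    intro n
    rw [hν, gaussianReal_map_const_mul]
    congr 1
    · simp
    · rw [mul_comm]
      congr 1
      ext
      rw [NNReal.coe_mk, Real.coe_toNNReal _ (by linarith [hlt1 n]), hc,
        Real.sq_sqrt (by linarith [hlt1 n])]
  -- equality of lintegrals of bounded continuous nonnegative functions
  refine ext_of_forall_lintegral_eq_of_IsFiniteMeasure (fun f => ?_)
  have hfm : Measurable fun x : ℝ => (f x : ℝ≥0∞) := f.measurable_coe_ennreal_comp
  -- key identity for each n
  have key : ∀ n : ℕ, ∫⁻ x, f x ∂μ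
      = ∫⁻ p : ℝ × ℝ, f (a n * p.1 + c n * p.2) ∂(μ.prod ν) := by
    intro n
    conv_lhs => rw [← hinv ((n : ℝ) + 1) (hpos n)]
    rw [hgauss n, Measure.conv, Measure.map_prod_map _ _
      (by fun_prop : Measurable fun x : ℝ => Real.exp (-m * ((n : ℝ) + 1)) * x)
      (by fun_prop : Measurable fun x : ℝ => c n * x),
      Measure.map_map measurable_add (by fun_prop), lintegral_map hfm (by fun_prop)]
    rfl
  -- limits of the coefficients
  have hexp : Tendsto (fun t : ℝ => Real.exp (-(t))) atTop (𝓝 0) := by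
    simpa [Function.comp_def] using Real.tendsto_exp_atBot.comp tendsto_neg_atTop_atBot
  have hn1 : Tendsto (fun n : ℕ => (n : ℝ) + 1) atTop atTop :=
    tendsto_atTop_add_const_right _ _ tendsto_natCast_atTop_atTop
  have ha0 : Tendsto a atTop (𝓝 0) := by
    rw [ha]
    have : Tendsto (fun n : ℕ => m * ((n : ℝ) + 1)) atTop atTop :=
      hn1.const_mul_atTop hm
    simpa [neg_mul, Function.comp_def] using hexp.comp this
  have hc1 : Tendsto c atTop (𝓝 1) := by
    rw [hc]
    have h2 : Tendsto (fun n : ℕ => 2 * m * ((n : ℝ) + 1)) atTop atTop :=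
      hn1.const_mul_atTop (by linarith)
    have h3 : Tendsto (fun n : ℕ => 1 - Real.exp (-(2 * m * ((n : ℝ) + 1)))) atTop (𝓝 1) := by
      simpa using (tendsto_const_nhds.sub (hexp.comp h2) :
        Tendsto (fun n : ℕ => 1 - Real.exp (-(2 * m * ((n : ℝ) + 1)))) atTop (𝓝 (1 - 0)))
    simpa [Function.comp_def] using (Real.continuous_sqrt.tendsto 1).comp h3
  -- dominated convergence on the product measure
  have hdom : Tendsto (fun n => ∫⁻ p : ℝ × ℝ, f (a n * p.1 + c n * p.2) ∂(μ.prod ν)) atTop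
      (𝓝 (∫⁻ p : ℝ × ℝ, f p.2 ∂(μ.prod ν))) := by
    apply tendsto_lintegral_of_dominated_convergence (fun _ => (nndist f 0 : ℝ≥0∞))
    · intro n
      exact hfm.comp ((measurable_fst.const_mul _).add (measurable_snd.const_mul _))
    · intro n
      filter_upwards with p
      exact_mod_cast BoundedContinuousFunction.NNReal.upper_bound f _
    · simp only [lintegral_const, measure_univ, mul_one, ne_eq, ENNReal.coe_ne_top,
        not_false_eq_true]
    · filter_upwards with p
      have harg : Tendsto (fun n => a n * p.1 + c n * p.2) atTop (𝓝 p.2) := by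
        have := (ha0.mul_const p.1).add (hc1.mul_const p.2)
        simpa only [zero_mul, one_mul, zero_add] using this
      exact (ENNReal.continuous_coe.tendsto _).comp ((f.continuous.tendsto _).comp harg)
  have hsnd : ∫⁻ p : ℝ × ℝ, f p.2 ∂(μ.prod ν) = ∫⁻ x, f x ∂ν := by
    rw [← lintegral_map hfm measurable_snd, Measure.map_snd_prod]
    simp
  rw [hsnd] at hdom
  have : Tendsto (fun _ : ℕ => ∫⁻ x, f x ∂μ) atTop (𝓝 (∫⁻ x, f x ∂ν)) := by
    simpa only [← key] using hdom
  exact tendsto_nhds_unique tendsto_const_nhds this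
end

section
/- Let L > 0 and 1/4 < γ < 3/4, and set λ_n = (2πn/L)² for n ∈ ℤ, n ≠ 0. There is a constant C (depending on L and γ) such that for every sequence (v_n)_{n∈ℤ} of complex numbers with v_0 = 0 and ∑_{n≠0} λ_n^{3/4−γ} |v_n|² < ∞, the sequence c_n = (π i n / L) ∑_{k∈ℤ} v_k v_{n−k} (the inner sum converging absolutely) satisfies ∑_{n≠0} λ_n^{−2γ} |c_n|² ≤ C (∑_{k≠0} λ_k^{3/4−γ} |v_k|²)². -/
open scoped ComplexConjugate

/-- Eigenvalue of `A = -d²/dξ²` on the `n`-th Fourier mode of a zero-mean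
`L`-periodic function. -/
noncomputable def ksEigen (L : ℝ) (n : ℤ) : ℝ := (2 * Real.pi * n / L) ^ 2

/-- `n`-th Fourier coefficient of the Kuramoto–Sivashinsky nonlinearity
`B(v,v) = v v' = ½(v²)'`: `c_n = (π i n / L) ∑_k v_k v_{n-k}`. -/
noncomputable def ksB (L : ℝ) (v : ℤ → ℂ) (n : ℤ) : ℂ :=
  (Real.pi : ℂ) * Complex.I * (n : ℂ) / (L : ℂ) * ∑' k : ℤ, v k * v (n - k)

open Real Finset

lemma bern_step {t a : ℝ} (ht0 : 0 < t) (ht1 : t ≤ 1) (ha : 1 ≤ a) :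
    (a - 1) ^ t ≤ a ^ t - t * a ^ (t - 1) := by
  have ha0 : 0 < a := lt_of_lt_of_le one_pos ha
  have hm : -1 ≤ -1/a := by
    rw [neg_div, neg_le_neg_iff, div_le_one ha0]; exact ha
  have h1 : (1 + (-1/a)) ^ t ≤ 1 + t * (-1/a) :=
    rpow_one_add_le_one_add_mul_self hm ht0.le ht1
  have hnn : (0:ℝ) ≤ 1 + (-1/a) := by
    rw [neg_div]
    have : 1/a ≤ 1 := by rw [div_le_one ha0]; exact ha
    linarith
  have he : a - 1 = a * (1 + (-1/a)) := by field_simp; ring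
  calc (a - 1) ^ t = a ^ t * (1 + (-1/a)) ^ t := by
        rw [he, Real.mul_rpow ha0.le hnn]
      _ ≤ a ^ t * (1 + t * (-1/a)) :=
        mul_le_mul_of_nonneg_left h1 (Real.rpow_nonneg ha0.le t)
      _ = a ^ t - t * (a ^ t / a) := by ring
      _ = a ^ t - t * a ^ (t - 1) := by
        rw [Real.rpow_sub ha0, Real.rpow_one]

-- ∑_{j=1}^N j^(t-1) ≤ (1/t + 1) N^t  for t > 0
lemma sum_rpow_le (t : ℝ) (ht0 : 0 < t) (N : ℕ) :
    ∑ j ∈ Finset.Icc 1 N, (j : ℝ) ^ (t - 1) ≤ (1/t + 1) * (N : ℝ) ^ t := by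
  rcases le_or_gt t 1 with ht1 | ht1
  · -- case t ≤ 1 : induction, bound by N^t/t
    have key : ∀ N : ℕ, ∑ j ∈ Finset.Icc 1 N, (j : ℝ) ^ (t - 1) ≤ (N : ℝ) ^ t / t := by
      intro N
      induction N with
      | zero => simp [Real.zero_rpow ht0.ne']
      | succ n ih =>
        rw [Finset.sum_Icc_succ_top (Nat.succ_le_succ (Nat.zero_le n))]
        have hb := bern_step ht0 ht1 (a := ((n:ℝ) + 1)) (by linarith [Nat.cast_nonneg (α:=ℝ) n])
        have : ((n:ℝ) + 1) - 1 = (n : ℝ) := by ring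
        rw [this] at hb
        push_cast
        have : (n : ℝ) ^ t / t + ((n:ℝ) + 1) ^ (t - 1) ≤ ((n:ℝ) + 1) ^ t / t := by
          rw [div_add' _ _ _ ht0.ne', div_le_div_iff_of_pos_right ht0]
          nlinarith
        linarith
    calc ∑ j ∈ Finset.Icc 1 N, (j : ℝ) ^ (t - 1) ≤ (N : ℝ) ^ t / t := key N
      _ ≤ (1/t + 1) * (N:ℝ) ^ t := by
        have := Real.rpow_nonneg (Nat.cast_nonneg N) t
        rw [div_eq_inv_mul, one_div]
        nlinarith
  · -- case t > 1 : each term ≤ N^(t-1)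
    have hN : ∀ j ∈ Finset.Icc 1 N, (j:ℝ) ^ (t-1) ≤ (N:ℝ) ^ (t-1) := by
      intro j hj
      rw [Finset.mem_Icc] at hj
      apply Real.rpow_le_rpow (by positivity) (by exact_mod_cast hj.2) (by linarith)
    calc ∑ j ∈ Finset.Icc 1 N, (j : ℝ) ^ (t - 1)
        ≤ ∑ _j ∈ Finset.Icc 1 N, (N:ℝ) ^ (t-1) := Finset.sum_le_sum hN
      _ = (Finset.Icc 1 N).card * (N:ℝ) ^ (t-1) := by rw [Finset.sum_const, nsmul_eq_mul]
      _ ≤ (N:ℝ) * (N:ℝ) ^ (t-1) := by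
        apply mul_le_mul_of_nonneg_right _ (Real.rpow_nonneg (Nat.cast_nonneg N) _)
        simp [Nat.card_Icc]
      _ = (N:ℝ) ^ (1:ℝ) * (N:ℝ) ^ (t-1) := by rw [Real.rpow_one]
      _ ≤ (1/t + 1) * (N:ℝ) ^ t := by
        rcases Nat.eq_zero_or_pos N with h0 | h0
        · subst h0; simp [Real.zero_rpow (by linarith : t ≠ 0)]
        · rw [← Real.rpow_add (by exact_mod_cast h0)]
          have h1 : (1:ℝ) + (t-1) = t := by ring
          rw [h1]
          have := Real.rpow_nonneg (Nat.cast_nonneg N) t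
          have ht0' : 0 < 1/t := by positivity
          nlinarith


lemma icc_succ_int (M : ℕ) :
    Finset.Icc (-(M:ℤ) - 1) ((M:ℤ) + 1) =
      insert (-(M:ℤ) - 1) (insert ((M:ℤ) + 1) (Finset.Icc (-(M:ℤ)) M)) := by
  ext k
  simp only [Finset.mem_Icc, Finset.mem_insert]
  omega

lemma sum_int_icc (g : ℕ → ℝ) (hg : ∀ j, 0 ≤ g j) (M : ℕ) :
    ∑ k ∈ Finset.Icc (-(M:ℤ)) M, (if k = 0 then 0 else g k.natAbs)
      ≤ 2 * ∑ j ∈ Finset.Icc 1 M, g j := by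
  induction M with
  | zero => simp
  | succ n ih =>
    have hcast : (-(↑(n+1):ℤ)) = -(n:ℤ) - 1 := by push_cast; ring
    have hcast2 : ((↑(n+1):ℤ)) = (n:ℤ) + 1 := by push_cast; ring
    rw [hcast, hcast2, icc_succ_int n]
    rw [Finset.sum_insert (by simp only [Finset.mem_insert, Finset.mem_Icc]; omega),
        Finset.sum_insert (by simp only [Finset.mem_Icc]; omega)]
    rw [Finset.sum_Icc_succ_top (Nat.succ_le_succ (Nat.zero_le n))]
    have e1 : (-(n:ℤ) - 1).natAbs = n+1 := by omega
    have e2 : ((n:ℤ) + 1).natAbs = n+1 := by omega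
    rw [if_neg (by omega : ¬(-(n:ℤ) - 1) = 0), if_neg (by omega : ¬((n:ℤ) + 1) = 0), e1, e2]
    linarith

lemma sum_dom (G : ℤ → ℝ) (g : ℕ → ℝ) (hg : ∀ j, 0 ≤ g j) (M : ℕ)
    (hG : ∀ k, G k ≤ if k ≠ 0 ∧ k.natAbs ≤ M then g k.natAbs else 0) (F : Finset ℤ) :
    ∑ k ∈ F, G k ≤ 2 * ∑ j ∈ Finset.Icc 1 M, g j := by
  set G' : ℤ → ℝ := fun k => if k ≠ 0 ∧ k.natAbs ≤ M then g k.natAbs else 0 with hG'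
  have hG'nn : ∀ k, 0 ≤ G' k := by
    intro k; simp only [hG']
    split
    · exact hg _
    · exact le_refl 0
  have step1 : ∑ k ∈ F, G k ≤ ∑ k ∈ F, G' k := Finset.sum_le_sum (fun k _ => hG k)
  have step2 : ∑ k ∈ F, G' k ≤ ∑ k ∈ Finset.Icc (-(M:ℤ)) M, G' k := by
    rw [← Finset.sum_subset (Finset.inter_subset_left (s₂ := Finset.Icc (-(M:ℤ)) M))
      (fun x hx hnx => ?_)]
    · apply Finset.sum_le_sum_of_subset_of_nonneg Finset.inter_subset_right
      intro k _ _; exact hG'nn k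
    · simp only [hG']
      rw [if_neg]
      rintro ⟨hk0, hkM⟩
      apply hnx
      rw [Finset.mem_inter, Finset.mem_Icc]
      exact ⟨hx, by omega⟩
  have step3 : ∑ k ∈ Finset.Icc (-(M:ℤ)) M, G' k
      ≤ ∑ k ∈ Finset.Icc (-(M:ℤ)) M, (if k = 0 then 0 else g k.natAbs) := by
    apply Finset.sum_le_sum
    intro k hk
    rw [Finset.mem_Icc] at hk
    simp only [hG']
    by_cases hk0 : k = 0
    · simp [hk0]
    · rw [if_pos ⟨hk0, by omega⟩, if_neg hk0]
  exact le_trans step1 (le_trans step2 (le_trans step3 (sum_int_icc g hg M)))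

lemma kernel_bound {s : ℝ} (hs0 : 0 < s) (hs1 : s < 1/2) :
    ∃ CK : ℝ, 0 ≤ CK ∧ ∀ (m : ℤ), m ≠ 0 → ∀ F : Finset ℤ,
      ∑ n ∈ F, ((if n = 0 then (0:ℝ) else ((n.natAbs:ℝ)) ^ (4*s - 1)) *
        (if (n - m).natAbs ≤ m.natAbs then (((n-m).natAbs:ℝ)) ^ (-(2*s)) else 0))
      ≤ CK * ((m.natAbs:ℝ)) ^ (2*s) := by
  have hc1 : (0:ℝ) ≤ 1/(1-2*s) := le_of_lt (div_pos one_pos (by linarith))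
  have hc2 : (0:ℝ) ≤ 1/(4*s) := le_of_lt (div_pos one_pos (by linarith))
  refine ⟨4*(1/(1-2*s)+1) + 16*(1/(4*s)+1), by linarith, ?_⟩
  intro m hm F
  set M : ℕ := m.natAbs with hM
  have hM1 : 1 ≤ M := by omega
  have ham : (1:ℝ) ≤ (M:ℝ) := by exact_mod_cast hM1
  have ham0 : (0:ℝ) < (M:ℝ) := lt_of_lt_of_le one_pos ham
  set am : ℝ := (M:ℝ)
  -- the two dominating functions
  set gA : ℕ → ℝ := fun j => 2 * am ^ (4*s-1) * (j:ℝ) ^ (-(2*s)) with hgA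
  set gB : ℕ → ℝ := fun j => 2 * am ^ (-(2*s)) * (j:ℝ) ^ (4*s-1) with hgB
  have hgAnn : ∀ j, 0 ≤ gA j := fun j => by
    simp only [hgA]; positivity
  have hgBnn : ∀ j, 0 ≤ gB j := fun j => by
    simp only [hgB]; positivity
  set φ : ℤ → ℝ := fun n => if (n - m) ≠ 0 ∧ (n-m).natAbs ≤ M then gA (n-m).natAbs else 0 with hφ
  set ψ : ℤ → ℝ := fun n => if n ≠ 0 ∧ n.natAbs ≤ 2*M then gB n.natAbs else 0 with hψ
  have hφnn : ∀ n, 0 ≤ φ n := fun n => by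
    simp only [hφ]; split
    · exact hgAnn _
    · exact le_refl 0
  have hψnn : ∀ n, 0 ≤ ψ n := fun n => by
    simp only [hψ]; split
    · exact hgBnn _
    · exact le_refl 0
  -- pointwise domination
  have hpt : ∀ n : ℤ, ((if n = 0 then (0:ℝ) else ((n.natAbs:ℝ)) ^ (4*s - 1)) *
        (if (n - m).natAbs ≤ m.natAbs then (((n-m).natAbs:ℝ)) ^ (-(2*s)) else 0))
      ≤ φ n + ψ n := by
    intro n
    by_cases hcond : (n - m).natAbs ≤ M
    swap
    · rw [if_neg (show ¬(n - m).natAbs ≤ m.natAbs from hcond), mul_zero]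
      exact add_nonneg (hφnn n) (hψnn n)
    by_cases hn0 : n = 0
    · rw [if_pos hn0, zero_mul]
      exact add_nonneg (hφnn n) (hψnn n)
    by_cases hnm : n - m = 0
    · have hz : (if (n - m).natAbs ≤ m.natAbs then (((n-m).natAbs:ℝ)) ^ (-(2*s)) else 0) = 0 := by
        rw [hnm]
        simp [Real.zero_rpow (show -(2*s) ≠ 0 by linarith)]
      rw [hz, mul_zero]
      exact add_nonneg (hφnn n) (hψnn n)
    rw [if_neg hn0, if_pos (show (n - m).natAbs ≤ m.natAbs from hcond)]
    set an : ℝ := (n.natAbs : ℝ)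
    set aj : ℝ := ((n-m).natAbs : ℝ)
    have han : (1:ℝ) ≤ an := Nat.one_le_cast.mpr (by omega)
    have haj : (1:ℝ) ≤ aj := Nat.one_le_cast.mpr (by omega)
    have hajM : aj ≤ am := Nat.cast_le.mpr hcond
    by_cases hA : 2 * (n-m).natAbs ≤ M
    · -- case A : n close to m, an ∈ [am/2, 2am]
      have hnabs : n.natAbs ≤ 2*M ∧ M ≤ 2 * n.natAbs := by omega
      have han2 : an ≤ 2 * am := by
        have h := Nat.cast_le (α := ℝ) |>.mpr hnabs.1
        push_cast at h
        exact h
      have ham2 : am ≤ 2 * an := by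
        have h := Nat.cast_le (α := ℝ) |>.mpr hnabs.2
        push_cast at h
        exact h
      have key : an ^ (4*s-1) ≤ 2 * am ^ (4*s-1) := by
        rcases le_or_gt 0 (4*s-1) with he | he
        · calc an ^ (4*s-1) ≤ (2*am) ^ (4*s-1) := by
                apply Real.rpow_le_rpow (by linarith) han2 he
            _ = 2 ^ (4*s-1) * am ^ (4*s-1) := Real.mul_rpow (by norm_num) ham0.le
            _ ≤ 2 * am ^ (4*s-1) := by
                apply mul_le_mul_of_nonneg_right _ (Real.rpow_nonneg ham0.le _)
                calc (2:ℝ) ^ (4*s-1) ≤ 2 ^ (1:ℝ) :=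
                      Real.rpow_le_rpow_of_exponent_le one_le_two (by linarith)
                  _ = 2 := Real.rpow_one 2
        · calc an ^ (4*s-1) ≤ (am/2) ^ (4*s-1) := by
                apply Real.rpow_le_rpow_of_nonpos (by linarith) (by linarith) he.le
            _ = am ^ (4*s-1) / 2 ^ (4*s-1) := Real.div_rpow ham0.le (by norm_num) _
            _ ≤ 2 * am ^ (4*s-1) := by
                have h2 : (2:ℝ) ^ (-1:ℝ) ≤ 2 ^ (4*s-1) :=
                  Real.rpow_le_rpow_of_exponent_le one_le_two (by linarith)
                rw [Real.rpow_neg_one] at h2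
                have hpos : (0:ℝ) < 2 ^ (4*s-1) := Real.rpow_pos_of_pos two_pos _
                have hnn : (0:ℝ) ≤ am ^ (4*s-1) := Real.rpow_nonneg ham0.le _
                rw [div_le_iff₀ hpos]
                nlinarith
      have : an ^ (4*s-1) * aj ^ (-(2*s)) ≤ φ n := by
        rw [hφ]
        simp only
        rw [if_pos ⟨hnm, hcond⟩]
        rw [hgA]
        simp only
        have hajnn : (0:ℝ) ≤ aj ^ (-(2*s)) := Real.rpow_nonneg (by linarith) _
        calc an ^ (4*s-1) * aj ^ (-(2*s)) ≤ (2 * am ^ (4*s-1)) * aj ^ (-(2*s)) :=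
              mul_le_mul_of_nonneg_right key hajnn
          _ = 2 * am ^ (4*s-1) * aj ^ (-(2*s)) := by ring
      linarith [hψnn n]
    · -- case B : |n - m| > M/2
      have hajhalf : am ≤ 2 * aj := by
        have h := Nat.cast_le (α := ℝ) |>.mpr (show M ≤ 2 * (n-m).natAbs by omega)
        push_cast at h
        exact h
      have key : aj ^ (-(2*s)) ≤ 2 * am ^ (-(2*s)) := by
        calc aj ^ (-(2*s)) ≤ (am/2) ^ (-(2*s)) := by
              apply Real.rpow_le_rpow_of_nonpos (by linarith) (by linarith) (by linarith)
          _ = am ^ (-(2*s)) / 2 ^ (-(2*s)) := Real.div_rpow ham0.le (by norm_num) _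
          _ ≤ 2 * am ^ (-(2*s)) := by
              have h2 : (2:ℝ) ^ (-1:ℝ) ≤ 2 ^ (-(2*s)) :=
                Real.rpow_le_rpow_of_exponent_le one_le_two (by linarith)
              rw [Real.rpow_neg_one] at h2
              have hpos : (0:ℝ) < 2 ^ (-(2*s)) := Real.rpow_pos_of_pos two_pos _
              have hnn : (0:ℝ) ≤ am ^ (-(2*s)) := Real.rpow_nonneg ham0.le _
              rw [div_le_iff₀ hpos]
              nlinarith
      have : an ^ (4*s-1) * aj ^ (-(2*s)) ≤ ψ n := by
        rw [hψ]
        simp only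
        rw [if_pos ⟨hn0, by omega⟩]
        rw [hgB]
        simp only
        have hannn : (0:ℝ) ≤ an ^ (4*s-1) := Real.rpow_nonneg (by linarith) _
        calc an ^ (4*s-1) * aj ^ (-(2*s)) ≤ an ^ (4*s-1) * (2 * am ^ (-(2*s))) :=
              mul_le_mul_of_nonneg_left key hannn
          _ = 2 * am ^ (-(2*s)) * an ^ (4*s-1) := by ring
      linarith [hφnn n]
  -- sum the two parts
  have hsplit : ∑ n ∈ F, ((if n = 0 then (0:ℝ) else ((n.natAbs:ℝ)) ^ (4*s - 1)) *
        (if (n - m).natAbs ≤ m.natAbs then (((n-m).natAbs:ℝ)) ^ (-(2*s)) else 0))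
      ≤ ∑ n ∈ F, φ n + ∑ n ∈ F, ψ n := by
    rw [← Finset.sum_add_distrib]
    exact Finset.sum_le_sum (fun n _ => hpt n)
  -- φ part
  have hφsum : ∑ n ∈ F, φ n ≤ 4*(1/(1-2*s)+1) * am ^ (2*s) := by
    have hre : ∑ n ∈ F, φ n = ∑ k ∈ F.image (· - m), (if k ≠ 0 ∧ k.natAbs ≤ M then gA k.natAbs else 0) := by
      rw [Finset.sum_image (by intro x _ y _ h; have h' : x - m = y - m := h; omega)]
    rw [hre]
    have := sum_dom _ gA hgAnn M (fun k => le_refl _) (F.image (· - m))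
    refine le_trans this ?_
    have hsum : ∑ j ∈ Finset.Icc 1 M, gA j
        = 2 * am ^ (4*s-1) * ∑ j ∈ Finset.Icc 1 M, (j:ℝ) ^ ((1-2*s) - 1) := by
      rw [Finset.mul_sum]
      apply Finset.sum_congr rfl
      intro j _
      have : (1-2*s) - 1 = -(2*s) := by ring
      rw [this]
    rw [hsum]
    have hbound := sum_rpow_le (1-2*s) (by linarith) M
    have hnn : (0:ℝ) ≤ 2 * am ^ (4*s-1) := by positivity
    calc 2 * (2 * am ^ (4*s-1) * ∑ j ∈ Finset.Icc 1 M, (j:ℝ) ^ ((1-2*s) - 1))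
        ≤ 2 * (2 * am ^ (4*s-1) * ((1/(1-2*s)+1) * am ^ (1-2*s))) := by
          apply mul_le_mul_of_nonneg_left _ (by norm_num)
          exact mul_le_mul_of_nonneg_left hbound hnn
      _ = 4*(1/(1-2*s)+1) * (am ^ (4*s-1) * am ^ (1-2*s)) := by ring
      _ = 4*(1/(1-2*s)+1) * am ^ (2*s) := by
          rw [← Real.rpow_add ham0]
          congr 1
          ring_nf
  -- ψ part
  have hψsum : ∑ n ∈ F, ψ n ≤ 16*(1/(4*s)+1) * am ^ (2*s) := by
    have := sum_dom ψ gB hgBnn (2*M) (fun k => by rw [hψ]) F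
    refine le_trans this ?_
    have hsum : ∑ j ∈ Finset.Icc 1 (2*M), gB j
        = 2 * am ^ (-(2*s)) * ∑ j ∈ Finset.Icc 1 (2*M), (j:ℝ) ^ ((4*s) - 1) := by
      rw [Finset.mul_sum]
    rw [hsum]
    have hbound := sum_rpow_le (4*s) (by linarith) (2*M)
    have h2M : ((2*M : ℕ):ℝ) ^ (4*s) ≤ 4 * am ^ (4*s) := by
      have hc : ((2*M : ℕ):ℝ) = 2 * am := by push_cast; ring
      rw [hc, Real.mul_rpow (by norm_num) ham0.le]
      apply mul_le_mul_of_nonneg_right _ (Real.rpow_nonneg ham0.le _)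
      calc (2:ℝ) ^ (4*s) ≤ 2 ^ (2:ℝ) :=
            Real.rpow_le_rpow_of_exponent_le one_le_two (by linarith)
        _ = 4 := by
            rw [show (2:ℝ) = ((2:ℕ):ℝ) by norm_num, Real.rpow_natCast]
            norm_num
    have hnn : (0:ℝ) ≤ 2 * am ^ (-(2*s)) := by positivity
    have hstep : ∑ j ∈ Finset.Icc 1 (2*M), (j:ℝ) ^ ((4*s) - 1)
        ≤ (1/(4*s)+1) * (4 * am ^ (4*s)) := by
      refine le_trans hbound ?_
      apply mul_le_mul_of_nonneg_left h2M (by positivity)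
    calc 2 * (2 * am ^ (-(2*s)) * ∑ j ∈ Finset.Icc 1 (2*M), (j:ℝ) ^ ((4*s) - 1))
        ≤ 2 * (2 * am ^ (-(2*s)) * ((1/(4*s)+1) * (4 * am ^ (4*s)))) := by
          apply mul_le_mul_of_nonneg_left _ (by norm_num)
          exact mul_le_mul_of_nonneg_left hstep hnn
      _ = 16*(1/(4*s)+1) * (am ^ (-(2*s)) * am ^ (4*s)) := by ring
      _ = 16*(1/(4*s)+1) * am ^ (2*s) := by
          rw [← Real.rpow_add ham0]
          congr 1
          ring_nf
  calc ∑ n ∈ F, ((if n = 0 then (0:ℝ) else ((n.natAbs:ℝ)) ^ (4*s - 1)) *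
        (if (n - m).natAbs ≤ m.natAbs then (((n-m).natAbs:ℝ)) ^ (-(2*s)) else 0))
      ≤ ∑ n ∈ F, φ n + ∑ n ∈ F, ψ n := hsplit
    _ ≤ 4*(1/(1-2*s)+1) * am ^ (2*s) + 16*(1/(4*s)+1) * am ^ (2*s) := add_le_add hφsum hψsum
    _ = (4*(1/(1-2*s)+1) + 16*(1/(4*s)+1)) * am ^ (2*s) := by ring

lemma rpow_sq' (x p : ℝ) (hx : 0 ≤ x) (hp : p ≠ 0) : (x ^ p)^2 = x ^ (2*p) := by
  rcases eq_or_lt_of_le hx with h0 | h0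
  · rw [← h0, Real.zero_rpow hp, Real.zero_rpow (by simp [hp] : 2*p ≠ 0)]
    norm_num
  · rw [show 2*p = p + p by ring, Real.rpow_add h0]
    ring


lemma ksEigen_rpow (L : ℝ) (hL : 0 < L) (n : ℤ) (p : ℝ) :
    ksEigen L n ^ p = ((2*Real.pi/L)^2) ^ p * ((n.natAbs:ℝ)) ^ (2*p) := by
  have hK : (0:ℝ) < (2*Real.pi/L)^2 := by
    have := Real.pi_pos
    positivity
  have hbase : ksEigen L n = (2*Real.pi/L)^2 * ((n.natAbs:ℝ))^(2:ℕ) := by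
    unfold ksEigen
    have : ((n.natAbs:ℝ))^(2:ℕ) = ((n:ℝ))^(2:ℕ) := by
      rw [Nat.cast_natAbs]
      push_cast
      rw [sq_abs]
    rw [this]
    field_simp
  rw [hbase, Real.mul_rpow hK.le (by positivity)]
  congr 1
  rw [← Real.rpow_natCast ((n.natAbs:ℝ)) 2, ← Real.rpow_mul (Nat.cast_nonneg _)]
  norm_num

set_option maxHeartbeats 2000000 in
/-- The estimate `|A^{-γ} B(v,v)| ≤ C |A^{3/8-γ/2} v|²` in Fourier form,
for `1/4 < γ < 3/4`. -/
theorem ksB_estimate_high (L γ : ℝ) (hL : 0 < L) (hγ₁ : 1 / 4 < γ) (hγ₂ : γ < 3 / 4) :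
    ∃ C : ℝ, ∀ v : ℤ → ℂ, v 0 = 0 →
      Summable (fun n : ℤ => ksEigen L n ^ (3 / 4 - γ) * ‖v n‖ ^ 2) →
      (∀ n : ℤ, Summable (fun k : ℤ => ‖v k * v (n - k)‖)) ∧
      Summable (fun n : ℤ => ksEigen L n ^ (-(2 * γ)) * ‖ksB L v n‖ ^ 2) ∧
      ∑' n : ℤ, ksEigen L n ^ (-(2 * γ)) * ‖ksB L v n‖ ^ 2 ≤
        C * (∑' k : ℤ, ksEigen L k ^ (3 / 4 - γ) * ‖v k‖ ^ 2) ^ 2 := by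
  have hπ := Real.pi_pos
  set s : ℝ := 3 / 4 - γ with hs_def
  have hs0 : 0 < s := by rw [hs_def]; linarith
  have hs1 : s < 1/2 := by rw [hs_def]; linarith
  obtain ⟨CK, hCK0, hCK⟩ := kernel_bound hs0 hs1
  set K : ℝ := (2*Real.pi/L)^2 with hK_def
  have hKpos : 0 < K := by positivity
  set Ks : ℝ := K ^ s with hKs_def
  have hKs : 0 < Ks := Real.rpow_pos_of_pos hKpos s
  set D : ℝ := K ^ (-(2*γ)) * (Real.pi/L)^2 with hD_def
  have hD0 : 0 ≤ D := by positivity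
  refine ⟨4 * D * CK * (Ks⁻¹)^2, ?_⟩
  intro v hv0 hsum
  -- basic objects
  set a : ℤ → ℝ := fun k => (k.natAbs : ℝ) with ha_def
  have ha0 : ∀ k, 0 ≤ a k := fun k => Nat.cast_nonneg _
  have hapos : ∀ k : ℤ, k ≠ 0 → 1 ≤ a k := fun k hk => Nat.one_le_cast.mpr (by omega)
  set b : ℤ → ℝ := fun k => a k ^ s * ‖v k‖ with hb_def
  set w : ℤ → ℝ := fun k => a k ^ (-s) with hw_def
  have hb0 : ∀ k, 0 ≤ b k := fun k => mul_nonneg (Real.rpow_nonneg (ha0 k) _) (norm_nonneg _)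
  have hw0 : ∀ k, 0 ≤ w k := fun k => Real.rpow_nonneg (ha0 k) _
  have hw1 : ∀ k, w k ≤ 1 := by
    intro k
    rcases eq_or_ne k 0 with rfl | hk
    · rw [hw_def]
      simp [ha_def, Real.zero_rpow (show -s ≠ 0 by simp [hs0.ne'])]
    · exact Real.rpow_le_one_of_one_le_of_nonpos (hapos k hk) (by linarith)
  have hwb : ∀ k, ‖v k‖ = w k * b k := by
    intro k
    rcases eq_or_ne k 0 with rfl | hk
    · simp [hv0, hb_def]
    · have h1 : (0:ℝ) < a k := lt_of_lt_of_le one_pos (hapos k hk)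
      rw [hb_def, hw_def]
      simp only
      rw [← mul_assoc, ← Real.rpow_add h1]
      simp
  -- summability of b^2
  have hpt_eq : ∀ n : ℤ, ksEigen L n ^ s * ‖v n‖ ^ 2 = Ks * b n ^ 2 := by
    intro n
    rw [ksEigen_rpow L hL n s, hb_def]
    simp only
    rw [mul_pow, rpow_sq' (a n) s (ha0 n) hs0.ne']
    rw [← hK_def, ← hKs_def]
    ring
  have hsum' : Summable (fun n => Ks * b n ^ 2) := hsum.congr hpt_eq
  have hb2 : Summable (fun n => b n ^ 2) := (summable_mul_left_iff hKs.ne').mp hsum'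
  set P : ℝ := ∑' k, b k ^ 2 with hP_def
  have hP0 : 0 ≤ P := tsum_nonneg (fun k => sq_nonneg _)
  have hM_eq : (∑' n, ksEigen L n ^ s * ‖v n‖ ^ 2) = Ks * P := by
    rw [tsum_congr hpt_eq, tsum_mul_left]
  -- convolution summability
  have hbshift : ∀ n : ℤ, Summable (fun k => b (n - k) ^ 2) := by
    intro n
    have := (Equiv.subLeft n).summable_iff.mpr hb2
    simpa [Function.comp_def] using this
  have hconv : ∀ n : ℤ, Summable (fun k => (w k * b k) * (w (n-k) * b (n-k))) := by
    intro n
    apply Summable.of_nonneg_of_le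
      (fun k => mul_nonneg (mul_nonneg (hw0 k) (hb0 k)) (mul_nonneg (hw0 _) (hb0 _)))
      (fun k => ?_) (((hb2.add (hbshift n)).mul_left (1/2 : ℝ)))
    have hA := mul_le_of_le_one_left (hb0 k) (hw1 k)
    have hB := mul_le_of_le_one_left (hb0 (n-k)) (hw1 (n-k))
    have h1 : (w k * b k) * (w (n-k) * b (n-k)) ≤ b k * b (n-k) :=
      mul_le_mul hA hB (mul_nonneg (hw0 _) (hb0 _)) (hb0 _)
    have h2 : b k * b (n-k) ≤ 1/2 * (b k ^ 2 + b (n-k) ^ 2) := by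
      nlinarith [sq_nonneg (b k - b (n-k))]
    linarith
  have hnormconv : ∀ n : ℤ, (fun k => ‖v k * v (n - k)‖)
      = fun k => (w k * b k) * (w (n-k) * b (n-k)) := by
    intro n
    funext k
    rw [norm_mul, hwb k, hwb (n-k)]
  have part1 : ∀ n : ℤ, Summable (fun k : ℤ => ‖v k * v (n - k)‖) := by
    intro n
    rw [hnormconv n]
    exact hconv n
  -- the convolution sum S and the bound on ‖ksB‖
  set S : ℤ → ℝ := fun n => ∑' k, (w k * b k) * (w (n-k) * b (n-k)) with hS_def
  have hS0 : ∀ n, 0 ≤ S n := fun n => tsum_nonneg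
    (fun k => mul_nonneg (mul_nonneg (hw0 k) (hb0 k)) (mul_nonneg (hw0 _) (hb0 _)))
  have hcoeff : ∀ n : ℤ, ‖(Real.pi : ℂ) * Complex.I * (n : ℂ) / (L : ℂ)‖
      = Real.pi * a n / L := by
    intro n
    rw [norm_div, norm_mul, norm_mul]
    rw [Complex.norm_I, Complex.norm_real, Complex.norm_intCast, Complex.norm_real]
    rw [Real.norm_eq_abs, Real.norm_eq_abs, abs_of_pos hπ, abs_of_pos hL]
    rw [ha_def]
    simp only
    rw [Nat.cast_natAbs]
    push_cast
    ring
  have hksB : ∀ n : ℤ, ‖ksB L v n‖ ≤ Real.pi * a n / L * S n := by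
    intro n
    rw [ksB, norm_mul, hcoeff n]
    apply mul_le_mul_of_nonneg_left _ (div_nonneg (mul_nonneg hπ.le (ha0 n)) hL.le)
    calc ‖∑' k, v k * v (n-k)‖ ≤ ∑' k, ‖v k * v (n-k)‖ := norm_tsum_le_tsum_norm (part1 n)
      _ = S n := by rw [hnormconv n]
  -- split the convolution at |k| ≤ |n-k|
  set e : ℤ → ℤ → ℝ := fun n k =>
    if k.natAbs ≤ (n - k).natAbs then (w k * b k) * (w (n-k) * b (n-k)) else 0 with he_def
  set e' : ℤ → ℤ → ℝ := fun n k =>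
    if k.natAbs ≤ (n - k).natAbs then 0 else (w k * b k) * (w (n-k) * b (n-k)) with he'_def
  have he0 : ∀ n k, 0 ≤ e n k := by
    intro n k
    rw [he_def]
    simp only
    split
    · exact mul_nonneg (mul_nonneg (hw0 k) (hb0 k)) (mul_nonneg (hw0 _) (hb0 _))
    · exact le_refl 0
  have he'0 : ∀ n k, 0 ≤ e' n k := by
    intro n k
    rw [he'_def]
    simp only
    split
    · exact le_refl 0
    · exact mul_nonneg (mul_nonneg (hw0 k) (hb0 k)) (mul_nonneg (hw0 _) (hb0 _))
  have hele : ∀ n k, e n k ≤ (w k * b k) * (w (n-k) * b (n-k)) := by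
    intro n k
    rw [he_def]
    simp only
    split
    · exact le_refl _
    · exact mul_nonneg (mul_nonneg (hw0 k) (hb0 k)) (mul_nonneg (hw0 _) (hb0 _))
  have he'le : ∀ n k, e' n k ≤ (w k * b k) * (w (n-k) * b (n-k)) := by
    intro n k
    rw [he'_def]
    simp only
    split
    · exact mul_nonneg (mul_nonneg (hw0 k) (hb0 k)) (mul_nonneg (hw0 _) (hb0 _))
    · exact le_refl _
  have hesum : ∀ n, Summable (e n) := fun n =>
    Summable.of_nonneg_of_le (he0 n) (hele n) (hconv n)
  have he'sum : ∀ n, Summable (e' n) := fun n =>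
    Summable.of_nonneg_of_le (he'0 n) (he'le n) (hconv n)
  have hsplit : ∀ n, S n = (∑' k, e n k) + ∑' k, e' n k := by
    intro n
    rw [← Summable.tsum_add (hesum n) (he'sum n), hS_def]
    apply tsum_congr
    intro k
    rw [he_def, he'_def]
    simp only
    split <;> simp
  have he'swap : ∀ n, (∑' k, e' n k) ≤ ∑' k, e n k := by
    intro n
    have hre : (∑' k, e' n k) = ∑' k, e' n (n - k) := by
      have := (Equiv.subLeft n).tsum_eq (e' n)
      simpa [Function.comp] using this.symm
    rw [hre]
    have hsub : ∀ k : ℤ, n - (n - k) = k := fun k => by ring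
    have hsummable : Summable (fun k => e' n (n - k)) := by
      have := (Equiv.subLeft n).summable_iff.mpr (he'sum n)
      simpa [Function.comp_def] using this
    apply Summable.tsum_le_tsum _ hsummable (hesum n)
    intro k
    rw [he'_def, he_def]
    simp only [hsub]
    by_cases h : (n-k).natAbs ≤ k.natAbs
    · rw [if_pos h]
      split
      · exact mul_nonneg (mul_nonneg (hw0 k) (hb0 k)) (mul_nonneg (hw0 _) (hb0 _))
      · exact le_refl 0
    · rw [if_neg h, if_pos (by omega : k.natAbs ≤ (n-k).natAbs)]
      exact le_of_eq (by ring)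
  have hS2S1 : ∀ n, S n ≤ 2 * ∑' k, e n k := by
    intro n
    rw [hsplit n]
    linarith [he'swap n]
    -- Cauchy–Schwarz
  set q : ℤ → ℤ → ℝ := fun n k =>
    (if k.natAbs ≤ (n - k).natAbs then w k * (w (n-k) * b (n-k)) else 0)^2 with hq_def
  have hq0 : ∀ n k, 0 ≤ q n k := fun n k => sq_nonneg _
  have hqle : ∀ n k, q n k ≤ b (n-k)^2 := by
    intro n k
    rw [hq_def]
    simp only
    split
    · apply pow_le_pow_left₀ (mul_nonneg (hw0 k) (mul_nonneg (hw0 _) (hb0 _)))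
      calc w k * (w (n-k) * b (n-k)) ≤ 1 * (w (n-k) * b (n-k)) :=
            mul_le_mul_of_nonneg_right (hw1 k) (mul_nonneg (hw0 _) (hb0 _))
        _ = w (n-k) * b (n-k) := one_mul _
        _ ≤ 1 * b (n-k) := mul_le_mul_of_nonneg_right (hw1 _) (hb0 _)
        _ = b (n-k) := one_mul _
    · simpa using sq_nonneg (b (n-k))
  have hqsum : ∀ n, Summable (q n) := fun n =>
    Summable.of_nonneg_of_le (hq0 n) (hqle n) (hbshift n)
  set Q : ℤ → ℝ := fun n => ∑' k, q n k with hQ_def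
  have hQ0 : ∀ n, 0 ≤ Q n := fun n => tsum_nonneg (hq0 n)
  have hCS : ∀ n, (∑' k, e n k)^2 ≤ P * Q n := by
    intro n
    have hPQ0 : 0 ≤ P * Q n := mul_nonneg hP0 (hQ0 n)
    have hfin : ∀ F : Finset ℤ, (∑ k ∈ F, e n k) ≤ Real.sqrt (P * Q n) := by
      intro F
      have h1 : (∑ k ∈ F, e n k)^2 ≤
          (∑ k ∈ F, (if k.natAbs ≤ (n-k).natAbs then b k else 0)^2) *
          (∑ k ∈ F, q n k) := by
        have hcs := Finset.sum_mul_sq_le_sq_mul_sq F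
          (fun k => if k.natAbs ≤ (n-k).natAbs then b k else 0)
          (fun k => if k.natAbs ≤ (n-k).natAbs then w k * (w (n-k) * b (n-k)) else 0)
        have heq : ∀ k, e n k = (if k.natAbs ≤ (n-k).natAbs then b k else 0) *
            (if k.natAbs ≤ (n-k).natAbs then w k * (w (n-k) * b (n-k)) else 0) := by
          intro k
          rw [he_def]
          simp only
          split
          · ring
          · simp
        rw [Finset.sum_congr rfl (fun k _ => heq k)]
        have heq2 : ∀ k, q n k = (if k.natAbs ≤ (n-k).natAbs then
            w k * (w (n-k) * b (n-k)) else 0)^2 := fun k => by rw [hq_def]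
        rw [Finset.sum_congr rfl (fun k (_ : k ∈ F) => heq2 k)]
        exact hcs
      have h2 : (∑ k ∈ F, (if k.natAbs ≤ (n-k).natAbs then b k else 0)^2) ≤ P := by
        refine le_trans (Finset.sum_le_sum (fun k _ => ?_))
          (Summable.sum_le_tsum F (fun k _ => sq_nonneg _) hb2)
        split
        · exact le_refl _
        · simpa using sq_nonneg (b k)
      have h3 : (∑ k ∈ F, q n k) ≤ Q n := Summable.sum_le_tsum F (fun k _ => hq0 n k) (hqsum n)
      have h4 : (∑ k ∈ F, e n k)^2 ≤ P * Q n :=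
        le_trans h1 (mul_le_mul h2 h3 (Finset.sum_nonneg (fun k _ => hq0 n k)) hP0)
      have h5 : 0 ≤ ∑ k ∈ F, e n k := Finset.sum_nonneg (fun k _ => he0 n k)
      calc ∑ k ∈ F, e n k = Real.sqrt ((∑ k ∈ F, e n k)^2) := (Real.sqrt_sq h5).symm
        _ ≤ Real.sqrt (P * Q n) := Real.sqrt_le_sqrt h4
    have h6 : (∑' k, e n k) ≤ Real.sqrt (P * Q n) := Summable.tsum_le_of_sum_le (hesum n) hfin
    calc (∑' k, e n k)^2 ≤ Real.sqrt (P * Q n)^2 :=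
        pow_le_pow_left₀ (tsum_nonneg (he0 n)) h6 2
      _ = P * Q n := Real.sq_sqrt hPQ0
    -- weight u and kernel estimate
  set u : ℤ → ℝ := fun n => if n = 0 then 0 else a n ^ (4*s-1) with hu_def
  have hu0 : ∀ n, 0 ≤ u n := by
    intro n
    rw [hu_def]
    simp only
    split
    · exact le_refl 0
    · exact Real.rpow_nonneg (ha0 n) _
  have hq_sub : ∀ n m : ℤ, q n (n - m) =
      (if (n-m).natAbs ≤ m.natAbs then (a (n-m))^(-(2*s)) else 0) * (w m * b m)^2 := by
    intro n m
    rw [hq_def]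
    simp only [sub_sub_cancel]
    split
    · rw [mul_pow, hw_def]
      simp only
      rw [rpow_sq' (a (n-m)) (-s) (ha0 _) (by linarith)]
      rw [show 2 * (-s) = -(2*s) by ring]
    · simp
  have hker : ∀ m : ℤ, ∀ F : Finset ℤ, (∑ n ∈ F, u n * q n (n - m)) ≤ CK * b m ^ 2 := by
    intro m F
    rcases eq_or_ne m 0 with rfl | hm
    · have hz : ∀ n, u n * q n (n - 0) = 0 := by
        intro n
        rw [hq_sub n 0]
        rcases eq_or_ne n 0 with rfl | hn
        · rw [hu_def]
          simp
        · rw [if_neg (by omega : ¬ (n - 0).natAbs ≤ (0:ℤ).natAbs)]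
          ring
      rw [Finset.sum_congr rfl (fun n _ => hz n)]
      simp
      positivity
    · have hstep : (∑ n ∈ F, u n * q n (n - m)) =
          (∑ n ∈ F, ((if n = 0 then (0:ℝ) else a n ^ (4*s - 1)) *
            (if (n - m).natAbs ≤ m.natAbs then (a (n-m)) ^ (-(2*s)) else 0))) * (w m * b m)^2 := by
        rw [Finset.sum_mul]
        apply Finset.sum_congr rfl
        intro n _
        rw [hq_sub n m, hu_def]
        ring
      rw [hstep]
      have hkernel : (∑ n ∈ F, ((if n = 0 then (0:ℝ) else a n ^ (4*s - 1)) *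
            (if (n - m).natAbs ≤ m.natAbs then (a (n-m)) ^ (-(2*s)) else 0)))
          ≤ CK * a m ^ (2*s) := by
        simpa only [ha_def] using hCK m hm F
      have hwm : a m ^ (2*s) * (w m)^2 = 1 := by
        rw [hw_def]
        simp only
        rw [rpow_sq' (a m) (-s) (ha0 m) (by linarith)]
        rw [← Real.rpow_add (lt_of_lt_of_le one_pos (hapos m hm))]
        rw [show 2*s + 2 * (-s) = 0 by ring, Real.rpow_zero]
      calc (∑ n ∈ F, ((if n = 0 then (0:ℝ) else a n ^ (4*s - 1)) *
            (if (n - m).natAbs ≤ m.natAbs then (a (n-m)) ^ (-(2*s)) else 0))) * (w m * b m)^2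
          ≤ (CK * a m ^ (2*s)) * (w m * b m)^2 := by
            apply mul_le_mul_of_nonneg_right hkernel (sq_nonneg _)
        _ = CK * b m ^ 2 * (a m ^ (2*s) * (w m)^2) := by ring
        _ = CK * b m ^ 2 := by rw [hwm, mul_one]
  -- swap the order of summation
  have hrshift : ∀ n, Summable (fun m => q n (n - m)) := by
    intro n
    have := (Equiv.subLeft n).summable_iff.mpr (hqsum n)
    simpa [Function.comp_def] using this
  have hrsum : ∀ n, Summable (fun m => u n * q n (n - m)) := fun n =>
    (hrshift n).mul_left (u n)
  have hQre : ∀ n, u n * Q n = ∑' m, u n * q n (n - m) := by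
    intro n
    rw [tsum_mul_left]
    congr 1
    rw [hQ_def]
    simp only
    have := (Equiv.subLeft n).tsum_eq (q n)
    simpa [Function.comp] using this.symm
  have hW0 : ∀ n, 0 ≤ u n * Q n := fun n => mul_nonneg (hu0 n) (hQ0 n)
  have hWle : ∀ F : Finset ℤ, (∑ n ∈ F, u n * Q n) ≤ CK * P := by
    intro F
    have hswap : (∑ n ∈ F, u n * Q n) = ∑' m, ∑ n ∈ F, u n * q n (n - m) := by
      rw [Finset.sum_congr rfl (fun n _ => hQre n)]
      exact (Summable.tsum_finsetSum (fun n _ => hrsum n)).symm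
    rw [hswap]
    calc (∑' m, ∑ n ∈ F, u n * q n (n - m)) ≤ ∑' m, CK * b m ^ 2 :=
          Summable.tsum_le_tsum (fun m => hker m F) (summable_sum (fun n _ => hrsum n)) (hb2.mul_left CK)
      _ = CK * P := by rw [tsum_mul_left]
  have hWsum : Summable (fun n => u n * Q n) := summable_of_sum_le hW0 hWle
  have hWtsum : (∑' n, u n * Q n) ≤ CK * P := Summable.tsum_le_of_sum_le hWsum hWle
    -- final pointwise bound
  have hfpt : ∀ n : ℤ, ksEigen L n ^ (-(2 * γ)) * ‖ksB L v n‖ ^ 2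
      ≤ (4 * D * P) * (u n * Q n) := by
    intro n
    rcases eq_or_ne n 0 with rfl | hn
    · have hksB0 : ksB L v 0 = 0 := by
        rw [ksB]
        simp
      rw [hksB0, hu_def]
      simp
    · have hanpos : (0:ℝ) < a n := lt_of_lt_of_le one_pos (hapos n hn)
      have hE0 : 0 ≤ ksEigen L n ^ (-(2*γ)) := Real.rpow_nonneg (sq_nonneg _) _
      have h1 : ‖ksB L v n‖^2 ≤ (Real.pi * a n / L * S n)^2 := by
        apply pow_le_pow_left₀ (norm_nonneg _) (hksB n)
      have hkE : ksEigen L n ^ (-(2*γ)) = K ^ (-(2*γ)) * a n ^ (2*(-(2*γ))) := by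
        have := ksEigen_rpow L hL n (-(2*γ))
        rw [this, ← hK_def, ha_def]
      have hexp : a n ^ (2*(-(2*γ))) * (a n)^(2:ℕ) = a n ^ (4*s-1) := by
        rw [← Real.rpow_natCast (a n) 2, ← Real.rpow_add hanpos]
        congr 1
        rw [hs_def]
        push_cast
        ring
      have hS2 : S n ^ 2 ≤ 4 * (P * Q n) := by
        have hle : S n ^ 2 ≤ (2 * ∑' k, e n k)^2 :=
          pow_le_pow_left₀ (hS0 n) (hS2S1 n) 2
        have : (2 * ∑' k, e n k)^2 = 4 * (∑' k, e n k)^2 := by ring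
        rw [this] at hle
        have := hCS n
        linarith
      calc ksEigen L n ^ (-(2*γ)) * ‖ksB L v n‖^2
          ≤ ksEigen L n ^ (-(2*γ)) * (Real.pi * a n / L * S n)^2 :=
            mul_le_mul_of_nonneg_left h1 hE0
        _ = D * (a n ^ (2*(-(2*γ))) * (a n)^(2:ℕ)) * S n ^2 := by
            rw [hkE, hD_def]
            field_simp
        _ = D * a n ^ (4*s-1) * S n ^ 2 := by rw [hexp]
        _ ≤ D * a n ^ (4*s-1) * (4 * (P * Q n)) := by
            apply mul_le_mul_of_nonneg_left hS2
            exact mul_nonneg hD0 (Real.rpow_nonneg (ha0 n) _)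
        _ = (4 * D * P) * ((a n ^ (4*s-1)) * Q n) := by ring
        _ = (4 * D * P) * (u n * Q n) := by
            rw [hu_def]
            simp only [if_neg hn]
  have htarget0 : ∀ n : ℤ, 0 ≤ ksEigen L n ^ (-(2 * γ)) * ‖ksB L v n‖ ^ 2 :=
    fun n => mul_nonneg (Real.rpow_nonneg (sq_nonneg _) _) (sq_nonneg _)
  have part2 : Summable (fun n : ℤ => ksEigen L n ^ (-(2 * γ)) * ‖ksB L v n‖ ^ 2) :=
    Summable.of_nonneg_of_le htarget0 hfpt (hWsum.mul_left _)
  refine ⟨part1, part2, ?_⟩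
  have hbound : (∑' n : ℤ, ksEigen L n ^ (-(2 * γ)) * ‖ksB L v n‖ ^ 2)
      ≤ (4 * D * P) * (CK * P) := by
    calc (∑' n : ℤ, ksEigen L n ^ (-(2 * γ)) * ‖ksB L v n‖ ^ 2)
        ≤ ∑' n, (4 * D * P) * (u n * Q n) :=
          Summable.tsum_le_tsum hfpt part2 (hWsum.mul_left _)
      _ = (4 * D * P) * ∑' n, u n * Q n := tsum_mul_left
      _ ≤ (4 * D * P) * (CK * P) := by
          apply mul_le_mul_of_nonneg_left hWtsum
          positivity
  rw [hM_eq]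
  calc (∑' n : ℤ, ksEigen L n ^ (-(2 * γ)) * ‖ksB L v n‖ ^ 2)
      ≤ (4 * D * P) * (CK * P) := hbound
    _ = 4 * D * CK * (Ks⁻¹)^2 * (Ks * P)^2 := by
        field_simp
end

section
/- Let L > 0 and 0 ≤ γ ≤ 1/4, and set λ_n = (2πn/L)² for n ∈ ℤ, n ≠ 0. There is a constant C (depending on L and γ) such that for every sequence (v_n)_{n∈ℤ} of complex numbers with v_0 = 0 and ∑_{n≠0} λ_n^{5/4−2γ} |v_n|² < ∞, the sequence c_n = (π i n / L) ∑_{k∈ℤ} v_k v_{n−k} (the inner sum converging absolutely) satisfies ∑_{n≠0} λ_n^{−2γ} |c_n|² ≤ C (∑_{k≠0} λ_k^{5/4−2γ} |v_k|²)². -/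
open scoped ComplexConjugate

private lemma sqRpow (x s : ℝ) (hx : 0 ≤ x) : (x ^ 2) ^ s = x ^ (2 * s) := by
  rw [← Real.rpow_natCast x 2, ← Real.rpow_mul hx, Nat.cast_ofNat]

private lemma rpowSq (x s : ℝ) (hx : 0 ≤ x) : (x ^ s) ^ 2 = x ^ (2 * s) := by
  rw [← Real.rpow_natCast (x ^ s) 2, ← Real.rpow_mul hx, Nat.cast_ofNat, mul_comm]

private lemma summable_mul_of_sq {f g : ℤ → ℝ} (hf0 : ∀ k, 0 ≤ f k) (hg0 : ∀ k, 0 ≤ g k)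
    (hf : Summable fun k => f k ^ 2) (hg : Summable fun k => g k ^ 2) :
    Summable fun k => f k * g k := by
  refine Summable.of_nonneg_of_le (fun k => mul_nonneg (hf0 k) (hg0 k)) (fun k => ?_)
    ((hf.add hg).div_const 2)
  nlinarith [sq_nonneg (f k - g k)]

/-- Cauchy–Schwarz for infinite sums of nonnegative reals. -/
private lemma tsum_cauchy_schwarz {f g : ℤ → ℝ} (hf0 : ∀ k, 0 ≤ f k) (hg0 : ∀ k, 0 ≤ g k)
    (hf : Summable fun k => f k ^ 2) (hg : Summable fun k => g k ^ 2) :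
    (∑' k, f k * g k) ^ 2 ≤ (∑' k, f k ^ 2) * (∑' k, g k ^ 2) := by
  have hfg := summable_mul_of_sq hf0 hg0 hf hg
  set A := ∑' k, f k ^ 2 with hA
  set B := ∑' k, g k ^ 2 with hB
  have hA0 : 0 ≤ A := tsum_nonneg fun k => sq_nonneg _
  have hB0 : 0 ≤ B := tsum_nonneg fun k => sq_nonneg _
  have key : ∑' k, f k * g k ≤ Real.sqrt A * Real.sqrt B := by
    refine Summable.tsum_le_of_sum_le hfg (fun s => ?_)
    have h1 : (∑ i ∈ s, f i * g i) ^ 2 ≤ (∑ i ∈ s, f i ^ 2) * ∑ i ∈ s, g i ^ 2 :=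
      Finset.sum_mul_sq_le_sq_mul_sq s f g
    have h2 : (∑ i ∈ s, f i ^ 2) * ∑ i ∈ s, g i ^ 2 ≤ A * B := by
      refine mul_le_mul (Summable.sum_le_tsum s (fun k _ => sq_nonneg _) hf)
        (Summable.sum_le_tsum s (fun k _ => sq_nonneg _) hg)
        (Finset.sum_nonneg fun k _ => sq_nonneg _) hA0
    have h0 : 0 ≤ ∑ i ∈ s, f i * g i := Finset.sum_nonneg fun k _ => mul_nonneg (hf0 k) (hg0 k)
    calc ∑ i ∈ s, f i * g i = Real.sqrt ((∑ i ∈ s, f i * g i) ^ 2) := (Real.sqrt_sq h0).symm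
      _ ≤ Real.sqrt (A * B) := Real.sqrt_le_sqrt (h1.trans h2)
      _ = Real.sqrt A * Real.sqrt B := Real.sqrt_mul hA0 B
  calc (∑' k, f k * g k) ^ 2 ≤ (Real.sqrt A * Real.sqrt B) ^ 2 := by
        refine pow_le_pow_left₀ (tsum_nonneg fun k => mul_nonneg (hf0 k) (hg0 k)) key 2
    _ = A * B := by rw [mul_pow, Real.sq_sqrt hA0, Real.sq_sqrt hB0]

/-- Discrete convolution bound: for `p > 1` and `n ≠ 0`,
`∑_k |k|^{-p} |n-k|^{-p} ≤ 2^p * 2 * Z * |n|^{-p}`. -/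
private lemma conv_bound {p : ℝ} (hp : 1 < p) (n : ℤ) (hn : n ≠ 0) :
    Summable (fun k : ℤ => |(k : ℝ)| ^ (-p) * |((n - k : ℤ) : ℝ)| ^ (-p)) ∧
    (∑' k : ℤ, |(k : ℝ)| ^ (-p) * |((n - k : ℤ) : ℝ)| ^ (-p)) ≤
      2 ^ p * (2 * ∑' k : ℤ, |(k : ℝ)| ^ (-p)) * |(n : ℝ)| ^ (-p) := by
  have hZ : Summable fun k : ℤ => |(k : ℝ)| ^ (-p) := Real.summable_abs_int_rpow hp
  have hZ' : Summable fun k : ℤ => |((n - k : ℤ) : ℝ)| ^ (-p) := by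
    exact (hZ.comp_injective (Equiv.subLeft n).injective).congr
      (fun k => by simp [Function.comp, Equiv.subLeft])
  have hn1 : (1 : ℝ) ≤ |(n : ℝ)| := by
    rw [← Int.cast_abs]
    exact_mod_cast Int.one_le_abs (by simpa using hn)
  have hnpos : (0 : ℝ) < |(n : ℝ)| := lt_of_lt_of_le one_pos hn1
  have claim : ∀ k : ℤ, |(k : ℝ)| ^ (-p) * |((n - k : ℤ) : ℝ)| ^ (-p) ≤
      (2 ^ p * |(n : ℝ)| ^ (-p)) * (|(k : ℝ)| ^ (-p) + |((n - k : ℤ) : ℝ)| ^ (-p)) := by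
    intro k
    have habs : |(n : ℝ)| ≤ |(k : ℝ)| + |((n - k : ℤ) : ℝ)| := by
      push_cast
      have : (n : ℝ) = (k : ℝ) + ((n : ℝ) - (k : ℝ)) := by ring
      calc |(n : ℝ)| = |(k : ℝ) + ((n : ℝ) - (k : ℝ))| := by rw [← this]
        _ ≤ |(k : ℝ)| + |(n : ℝ) - (k : ℝ)| := abs_add_le _ _
    have hhalf : |(n : ℝ)| / 2 ≤ |(k : ℝ)| ∨ |(n : ℝ)| / 2 ≤ |((n - k : ℤ) : ℝ)| := by
      by_contra hcon
      push_neg at hcon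
      linarith [hcon.1, hcon.2]
    have hkey : ∀ x y : ℝ, 0 ≤ y → |(n : ℝ)| / 2 ≤ x →
        x ^ (-p) * y ^ (-p) ≤ (2 ^ p * |(n : ℝ)| ^ (-p)) * y ^ (-p) := by
      intro x y hy hx
      have hx0 : (0 : ℝ) < |(n : ℝ)| / 2 := by linarith
      have h1 : x ^ (-p) ≤ (|(n : ℝ)| / 2) ^ (-p) :=
        Real.rpow_le_rpow_of_nonpos hx0 hx (by linarith)
      have h2 : (|(n : ℝ)| / 2) ^ (-p) = 2 ^ p * |(n : ℝ)| ^ (-p) := by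
        rw [Real.div_rpow (le_of_lt hnpos) (by norm_num : (0:ℝ) ≤ 2),
          Real.rpow_neg (le_of_lt hnpos), Real.rpow_neg (by norm_num : (0:ℝ) ≤ 2),
          div_eq_mul_inv, inv_inv]
        ring
      have := mul_le_mul_of_nonneg_right h1 (Real.rpow_nonneg hy (-p))
      rw [h2] at this
      exact this
    have hc : (0:ℝ) ≤ 2 ^ p * |(n : ℝ)| ^ (-p) :=
      mul_nonneg (Real.rpow_nonneg (by norm_num) p) (Real.rpow_nonneg (abs_nonneg _) (-p))
    have hak : (0:ℝ) ≤ |(k : ℝ)| ^ (-p) := Real.rpow_nonneg (abs_nonneg _) (-p)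
    have hank : (0:ℝ) ≤ |((n - k : ℤ) : ℝ)| ^ (-p) := Real.rpow_nonneg (abs_nonneg _) (-p)
    rcases hhalf with h | h
    · have := hkey |(k : ℝ)| |((n - k : ℤ) : ℝ)| (abs_nonneg _) h
      nlinarith [mul_nonneg hc hak]
    · have := hkey |((n - k : ℤ) : ℝ)| |(k : ℝ)| (abs_nonneg _) h
      nlinarith [mul_nonneg hc hank]
  have hmaj : Summable fun k : ℤ => (2 ^ p * |(n : ℝ)| ^ (-p)) *
      (|(k : ℝ)| ^ (-p) + |((n - k : ℤ) : ℝ)| ^ (-p)) := ((hZ.add hZ').mul_left _)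
  have hsum : Summable (fun k : ℤ => |(k : ℝ)| ^ (-p) * |((n - k : ℤ) : ℝ)| ^ (-p)) :=
    Summable.of_nonneg_of_le
      (fun k => mul_nonneg (Real.rpow_nonneg (abs_nonneg _) _) (Real.rpow_nonneg (abs_nonneg _) _))
      claim hmaj
  refine ⟨hsum, ?_⟩
  have h1 : (∑' k : ℤ, |(k : ℝ)| ^ (-p) * |((n - k : ℤ) : ℝ)| ^ (-p)) ≤
      ∑' k : ℤ, (2 ^ p * |(n : ℝ)| ^ (-p)) *
        (|(k : ℝ)| ^ (-p) + |((n - k : ℤ) : ℝ)| ^ (-p)) := Summable.tsum_le_tsum claim hsum hmaj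
  have h2 : (∑' k : ℤ, |((n - k : ℤ) : ℝ)| ^ (-p)) = ∑' k : ℤ, |(k : ℝ)| ^ (-p) := by
    have := (Equiv.subLeft n).tsum_eq (fun k : ℤ => |(k : ℝ)| ^ (-p))
    simpa using this
  rw [tsum_mul_left, Summable.tsum_add hZ hZ', h2] at h1
  calc (∑' k : ℤ, |(k : ℝ)| ^ (-p) * |((n - k : ℤ) : ℝ)| ^ (-p)) ≤
      2 ^ p * |(n : ℝ)| ^ (-p) * ((∑' k : ℤ, |(k : ℝ)| ^ (-p)) + ∑' k : ℤ, |(k : ℝ)| ^ (-p)) := h1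
    _ = 2 ^ p * (2 * ∑' k : ℤ, |(k : ℝ)| ^ (-p)) * |(n : ℝ)| ^ (-p) := by ring

set_option maxHeartbeats 1000000 in
/-- The estimate `|A^{-γ} B(v,v)| ≤ C |A^{5/8-γ} v|²` in Fourier form,
for `0 ≤ γ ≤ 1/4`. -/
theorem ksB_estimate_mid (L γ : ℝ) (hL : 0 < L) (hγ₁ : 0 ≤ γ) (hγ₂ : γ ≤ 1 / 4) :
    ∃ C : ℝ, ∀ v : ℤ → ℂ, v 0 = 0 →
      Summable (fun n : ℤ => ksEigen L n ^ (5 / 4 - 2 * γ) * ‖v n‖ ^ 2) →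
      (∀ n : ℤ, Summable (fun k : ℤ => ‖v k * v (n - k)‖)) ∧
      Summable (fun n : ℤ => ksEigen L n ^ (-(2 * γ)) * ‖ksB L v n‖ ^ 2) ∧
      ∑' n : ℤ, ksEigen L n ^ (-(2 * γ)) * ‖ksB L v n‖ ^ 2 ≤
        C * (∑' k : ℤ, ksEigen L k ^ (5 / 4 - 2 * γ) * ‖v k‖ ^ 2) ^ 2 := by
  have hπ := Real.pi_pos
  set α : ℝ := 5 / 4 - 2 * γ with hαdef
  set b0 : ℝ := 2 * Real.pi / L with hb0def
  have hb0 : 0 < b0 := by positivity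
  have hα0 : 0 < α := by rw [hαdef]; linarith
  have hp : 1 < 2 * α := by rw [hαdef]; linarith
  set Z : ℝ := ∑' k : ℤ, |(k : ℝ)| ^ (-(2 * α)) with hZdef
  have hZ0 : 0 ≤ Z := tsum_nonneg fun k => Real.rpow_nonneg (abs_nonneg _) _
  set C₂ : ℝ := 2 ^ (2 * α) * (2 * Z) with hC2def
  set Cc : ℝ := b0 ^ (-(4 * γ)) * (Real.pi / L) ^ 2 * (b0 ^ (-α)) ^ 4 * C₂ with hCcdef
  have hCc0 : 0 ≤ Cc := by
    rw [hCcdef, hC2def]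
    have := Real.rpow_nonneg hb0.le (-(4 * γ))
    have := Real.rpow_nonneg hb0.le (-α)
    have h2 : (0:ℝ) ≤ 2 ^ (2 * α) := Real.rpow_nonneg (by norm_num) _
    positivity
  -- eigenvalue rewriting
  have hksnn : ∀ k : ℤ, 0 ≤ ksEigen L k := fun k => sq_nonneg _
  have hksE : ∀ (k : ℤ) (s : ℝ), ksEigen L k ^ s = (b0 * |(k : ℝ)|) ^ (2 * s) := by
    intro k s
    have h1 : ksEigen L k = (b0 * |(k : ℝ)|) ^ 2 := by
      simp only [ksEigen, hb0def]
      rw [mul_pow, sq_abs]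
      field_simp
    rw [h1, sqRpow _ s (by positivity)]
  refine ⟨Cc, fun v hv0 hvsum => ?_⟩
  set u : ℤ → ℝ := fun k => (b0 * |(k : ℝ)|) ^ α * ‖v k‖ with hudef
  have hu0 : ∀ k, 0 ≤ u k := fun k =>
    mul_nonneg (Real.rpow_nonneg (by positivity) _) (norm_nonneg _)
  have husq : ∀ k, ksEigen L k ^ α * ‖v k‖ ^ 2 = u k ^ 2 := by
    intro k
    rw [hudef]
    simp only
    rw [mul_pow, rpowSq _ α (by positivity), hksE k α]
  have hS : Summable fun k => u k ^ 2 := hvsum.congr husq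
  set realS : ℝ := ∑' k, u k ^ 2 with hrealS
  have hrealS0 : 0 ≤ realS := tsum_nonneg fun k => sq_nonneg _
  -- ℓ² bound on v
  have hv2 : Summable fun k => ‖v k‖ ^ 2 := by
    refine Summable.of_nonneg_of_le (fun k => sq_nonneg _) (fun k => ?_) (hS.mul_left (b0 ^ (-(2 * α))))
    rcases eq_or_ne k 0 with rfl | hk
    · have hz : ‖v 0‖ ^ 2 = 0 := by rw [hv0]; simp
      rw [hz]
      positivity
    · have hk1 : (1 : ℝ) ≤ |(k : ℝ)| := by
        rw [← Int.cast_abs]; exact_mod_cast Int.one_le_abs (by simpa using hk)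
      have h1 : b0 ^ (2 * α) ≤ (b0 * |(k : ℝ)|) ^ (2 * α) := by
        refine Real.rpow_le_rpow hb0.le (by nlinarith) (by linarith)
      have h2 : u k ^ 2 = (b0 * |(k : ℝ)|) ^ (2 * α) * ‖v k‖ ^ 2 := by
        rw [hudef]; simp only; rw [mul_pow, rpowSq _ α (by positivity)]
      have h3 : b0 ^ (-(2 * α)) * b0 ^ (2 * α) = 1 := by
        rw [← Real.rpow_add hb0]; simp
      calc ‖v k‖ ^ 2 = (b0 ^ (-(2 * α)) * b0 ^ (2 * α)) * ‖v k‖ ^ 2 := by rw [h3, one_mul]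
        _ ≤ b0 ^ (-(2 * α)) * ((b0 * |(k : ℝ)|) ^ (2 * α) * ‖v k‖ ^ 2) := by
            have := mul_le_mul_of_nonneg_right h1 (sq_nonneg ‖v k‖)
            have hb0' : 0 ≤ b0 ^ (-(2 * α)) := Real.rpow_nonneg hb0.le _
            nlinarith
        _ = b0 ^ (-(2 * α)) * u k ^ 2 := by rw [h2]
  have hshift : ∀ n : ℤ, Summable fun k => ‖v (n - k)‖ ^ 2 := fun n =>
    (hv2.comp_injective (Equiv.subLeft n).injective).congr
      (fun k => by simp [Function.comp, Equiv.subLeft])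
  have h1 : ∀ n : ℤ, Summable fun k : ℤ => ‖v k * v (n - k)‖ := by
    intro n
    exact (summable_mul_of_sq (fun k => norm_nonneg _) (fun k => norm_nonneg _) hv2
      (hshift n)).congr (fun k => (norm_mul _ _).symm)
  -- the convolution-square sequence
  set e : ℤ × ℤ ≃ ℤ × ℤ :=
    ⟨fun p => (p.2, p.1 - p.2), fun q => (q.1 + q.2, q.1), fun p => by simp, fun q => by simp⟩
    with hedef
  have hQ : Summable fun p : ℤ × ℤ => u p.1 ^ 2 * u p.2 ^ 2 :=
    hS.mul_of_nonneg hS (fun k => sq_nonneg _) (fun k => sq_nonneg _)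
  have hQ' : Summable fun p : ℤ × ℤ => u p.2 ^ 2 * u (p.1 - p.2) ^ 2 :=
    (hQ.comp_injective e.injective).congr (fun p => by simp [hedef, Function.comp])
  have hhn : ∀ n : ℤ, Summable fun k => u k ^ 2 * u (n - k) ^ 2 := fun n => hQ'.prod_factor n
  set h : ℤ → ℝ := fun n => ∑' k, u k ^ 2 * u (n - k) ^ 2 with hhdef
  have hh0 : ∀ n, 0 ≤ h n := fun n => tsum_nonneg fun k => mul_nonneg (sq_nonneg _) (sq_nonneg _)
  have hfib : HasSum h (∑' p : ℤ × ℤ, u p.2 ^ 2 * u (p.1 - p.2) ^ 2) :=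
    hQ'.hasSum.prod_fiberwise (fun n => (hhn n).hasSum)
  have hsumh : Summable h := hfib.summable
  have htsumh : ∑' n, h n = realS ^ 2 := by
    rw [hfib.tsum_eq]
    have he : (∑' p : ℤ × ℤ, u p.2 ^ 2 * u (p.1 - p.2) ^ 2) =
        ∑' p : ℤ × ℤ, u p.1 ^ 2 * u p.2 ^ 2 :=
      e.tsum_eq (fun p : ℤ × ℤ => u p.1 ^ 2 * u p.2 ^ 2)
    rw [he, ← Summable.tsum_mul_tsum hS hS hQ, hrealS, sq]
  -- the termwise bound
  have hfball : ∀ n : ℤ, ksEigen L n ^ (-(2 * γ)) * ‖ksB L v n‖ ^ 2 ≤ Cc * h n := by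
    intro n
    rcases eq_or_ne n 0 with rfl | hn
    · have : ksB L v 0 = 0 := by simp [ksB]
      rw [this]
      simp only [norm_zero]
      rw [zero_pow (by norm_num), mul_zero]
      exact mul_nonneg hCc0 (hh0 0)
    · have hn1 : (1 : ℝ) ≤ |(n : ℝ)| := by
        rw [← Int.cast_abs]; exact_mod_cast Int.one_le_abs (by simpa using hn)
      have hnpos : (0 : ℝ) < |(n : ℝ)| := lt_of_lt_of_le one_pos hn1
      set T : ℝ := ∑' k, ‖v k‖ * ‖v (n - k)‖ with hTdef
      have hT0 : 0 ≤ T := tsum_nonneg fun k => mul_nonneg (norm_nonneg _) (norm_nonneg _)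
      have hcn : ‖ksB L v n‖ ≤ Real.pi * |(n : ℝ)| / L * T := by
        rw [ksB, norm_mul]
        have hsc : ‖(Real.pi : ℂ) * Complex.I * (n : ℂ) / (L : ℂ)‖ =
            Real.pi * |(n : ℝ)| / L := by
          rw [norm_div, norm_mul, norm_mul]
          simp [Complex.norm_real, abs_of_pos hπ, abs_of_pos hL]
        rw [hsc]
        refine mul_le_mul_of_nonneg_left ?_ (by positivity)
        calc ‖∑' k : ℤ, v k * v (n - k)‖ ≤ ∑' k : ℤ, ‖v k * v (n - k)‖ :=
              norm_tsum_le_tsum_norm (h1 n)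
          _ = T := tsum_congr fun k => norm_mul _ _
      -- identity for ‖v k‖
      have hvid : ∀ k : ℤ, ‖v k‖ = b0 ^ (-α) * (|(k : ℝ)| ^ (-α) * u k) := by
        intro k
        rcases eq_or_ne k 0 with rfl | hk
        · rw [hudef]; simp [hv0]
        · have hk1 : (0 : ℝ) < |(k : ℝ)| := by
            rw [← Int.cast_abs]
            exact_mod_cast Int.one_le_abs (by simpa using hk)
          rw [hudef]
          simp only
          rw [Real.mul_rpow hb0.le (abs_nonneg _)]
          have hbk : b0 ^ (-α) * b0 ^ α = 1 := by rw [← Real.rpow_add hb0]; simp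
          have hkk : |(k : ℝ)| ^ (-α) * |(k : ℝ)| ^ α = 1 := by
            rw [← Real.rpow_add hk1]; simp
          calc ‖v k‖ = (b0 ^ (-α) * b0 ^ α) * (|(k : ℝ)| ^ (-α) * |(k : ℝ)| ^ α) * ‖v k‖ := by
                rw [hbk, hkk]; ring
            _ = b0 ^ (-α) * (|(k : ℝ)| ^ (-α) * (b0 ^ α * |(k : ℝ)| ^ α * ‖v k‖)) := by ring
      set X : ℝ := ∑' k : ℤ, (|(k : ℝ)| ^ (-α) * |((n - k : ℤ) : ℝ)| ^ (-α)) * (u k * u (n - k))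
        with hXdef
      have hTid : T = b0 ^ (-α) * b0 ^ (-α) * X := by
        rw [hXdef, ← tsum_mul_left, hTdef]
        exact tsum_congr fun k => by rw [hvid k, hvid (n - k)]; ring
      -- Cauchy–Schwarz
      have hfsq : Summable fun k : ℤ =>
          (|(k : ℝ)| ^ (-α) * |((n - k : ℤ) : ℝ)| ^ (-α)) ^ 2 := by
        refine ((conv_bound hp n hn).1).congr (fun k => ?_)
        rw [mul_pow, rpowSq _ (-α) (abs_nonneg _), rpowSq _ (-α) (abs_nonneg _),
          show 2 * (-α) = -(2 * α) by ring]
      have hgsq : Summable fun k : ℤ => (u k * u (n - k)) ^ 2 :=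
        (hhn n).congr fun k => (mul_pow _ _ _).symm
      have hcs := tsum_cauchy_schwarz
        (f := fun k : ℤ => |(k : ℝ)| ^ (-α) * |((n - k : ℤ) : ℝ)| ^ (-α))
        (g := fun k : ℤ => u k * u (n - k))
        (fun k => mul_nonneg (Real.rpow_nonneg (abs_nonneg _) _)
          (Real.rpow_nonneg (abs_nonneg _) _))
        (fun k => mul_nonneg (hu0 _) (hu0 _)) hfsq hgsq
      have hKsum : (∑' k : ℤ, (|(k : ℝ)| ^ (-α) * |((n - k : ℤ) : ℝ)| ^ (-α)) ^ 2) ≤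
          C₂ * |(n : ℝ)| ^ (-(2 * α)) := by
        have heq : (∑' k : ℤ, (|(k : ℝ)| ^ (-α) * |((n - k : ℤ) : ℝ)| ^ (-α)) ^ 2) =
            ∑' k : ℤ, |(k : ℝ)| ^ (-(2 * α)) * |((n - k : ℤ) : ℝ)| ^ (-(2 * α)) := by
          refine tsum_congr fun k => ?_
          rw [mul_pow, rpowSq _ (-α) (abs_nonneg _), rpowSq _ (-α) (abs_nonneg _),
            show 2 * (-α) = -(2 * α) by ring]
        rw [heq, hC2def, hZdef]
        exact (conv_bound hp n hn).2
      have hgeq : (∑' k : ℤ, (u k * u (n - k)) ^ 2) = h n := by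
        rw [hhdef]
        exact tsum_congr fun k => mul_pow _ _ _
      have hX2 : X ^ 2 ≤ C₂ * |(n : ℝ)| ^ (-(2 * α)) * h n := by
        rw [hXdef]
        calc (∑' k : ℤ, (|(k : ℝ)| ^ (-α) * |((n - k : ℤ) : ℝ)| ^ (-α)) * (u k * u (n - k))) ^ 2 ≤
            (∑' k : ℤ, (|(k : ℝ)| ^ (-α) * |((n - k : ℤ) : ℝ)| ^ (-α)) ^ 2) *
              (∑' k : ℤ, (u k * u (n - k)) ^ 2) := hcs
          _ ≤ C₂ * |(n : ℝ)| ^ (-(2 * α)) * h n := by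
              rw [hgeq]
              exact mul_le_mul_of_nonneg_right hKsum (hh0 n)
      have hlam : ksEigen L n ^ (-(2 * γ)) = b0 ^ (-(4 * γ)) * |(n : ℝ)| ^ (-(4 * γ)) := by
        rw [hksE n (-(2 * γ)), show 2 * (-(2 * γ)) = -(4 * γ) by ring,
          Real.mul_rpow hb0.le (abs_nonneg _)]
      have hP : |(n : ℝ)| ^ (-(4 * γ)) * |(n : ℝ)| ^ (2 : ℕ) * |(n : ℝ)| ^ (-(2 * α)) ≤ 1 := by
        rw [← Real.rpow_natCast |(n : ℝ)| 2, ← Real.rpow_add hnpos, ← Real.rpow_add hnpos]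
        have hexp : -(4 * γ) + (2 : ℕ) + -(2 * α) = -(1 / 2) := by
          rw [hαdef]; push_cast; ring
        rw [hexp]
        exact Real.rpow_le_one_of_one_le_of_nonpos hn1 (by norm_num)
      have hCc0' : 0 ≤ b0 ^ (-(4 * γ)) * |(n : ℝ)| ^ (-(4 * γ)) :=
        mul_nonneg (Real.rpow_nonneg hb0.le _) (Real.rpow_nonneg (abs_nonneg _) _)
      calc ksEigen L n ^ (-(2 * γ)) * ‖ksB L v n‖ ^ 2
          = b0 ^ (-(4 * γ)) * |(n : ℝ)| ^ (-(4 * γ)) * ‖ksB L v n‖ ^ 2 := by rw [hlam]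
        _ ≤ b0 ^ (-(4 * γ)) * |(n : ℝ)| ^ (-(4 * γ)) * (Real.pi * |(n : ℝ)| / L * T) ^ 2 :=
            mul_le_mul_of_nonneg_left (pow_le_pow_left₀ (norm_nonneg _) hcn 2) hCc0'
        _ = b0 ^ (-(4 * γ)) * (Real.pi / L) ^ 2 * (b0 ^ (-α)) ^ 4 *
              (|(n : ℝ)| ^ (-(4 * γ)) * |(n : ℝ)| ^ (2 : ℕ)) * X ^ 2 := by
            rw [hTid]; ring
        _ ≤ b0 ^ (-(4 * γ)) * (Real.pi / L) ^ 2 * (b0 ^ (-α)) ^ 4 *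
              (|(n : ℝ)| ^ (-(4 * γ)) * |(n : ℝ)| ^ (2 : ℕ)) *
              (C₂ * |(n : ℝ)| ^ (-(2 * α)) * h n) := by
            refine mul_le_mul_of_nonneg_left hX2 ?_
            have := Real.rpow_nonneg hb0.le (-(4 * γ))
            have := Real.rpow_nonneg hb0.le (-α)
            have := Real.rpow_nonneg (abs_nonneg (n : ℝ)) (-(4 * γ))
            positivity
        _ = Cc * ((|(n : ℝ)| ^ (-(4 * γ)) * |(n : ℝ)| ^ (2 : ℕ) * |(n : ℝ)| ^ (-(2 * α)))) *
              h n := by rw [hCcdef]; ring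
        _ ≤ Cc * 1 * h n := by
            refine mul_le_mul_of_nonneg_right (mul_le_mul_of_nonneg_left hP hCc0) (hh0 n)
        _ = Cc * h n := by ring
  -- assemble
  have hf0 : ∀ n : ℤ, 0 ≤ ksEigen L n ^ (-(2 * γ)) * ‖ksB L v n‖ ^ 2 := fun n =>
    mul_nonneg (Real.rpow_nonneg (hksnn n) _) (sq_nonneg _)
  have hfS : Summable fun n : ℤ => ksEigen L n ^ (-(2 * γ)) * ‖ksB L v n‖ ^ 2 :=
    Summable.of_nonneg_of_le hf0 hfball (hsumh.mul_left Cc)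
  refine ⟨h1, hfS, ?_⟩
  have hRS : (∑' k : ℤ, ksEigen L k ^ α * ‖v k‖ ^ 2) = realS := tsum_congr husq
  rw [hRS]
  calc (∑' n : ℤ, ksEigen L n ^ (-(2 * γ)) * ‖ksB L v n‖ ^ 2) ≤ ∑' n, Cc * h n :=
      Summable.tsum_le_tsum hfball hfS (hsumh.mul_left Cc)
    _ = Cc * ∑' n, h n := tsum_mul_left
    _ = Cc * realS ^ 2 := by rw [htsumh]
end

section
/- Let L > 0, ν > 0, a > 1/(4ν), γ ∈ ℝ and t > 0. Set λ_j = (2πj/L)² and μ_j = ν λ_j² − λ_j + a for j ≥ 1 (so μ_j > 0 for all j). Then sup_{j≥1} e^{−μ_j t} · λ_j^{−γ} · (2μ_j / (1 − e^{−2μ_j t}))^{1/2} < ∞. -/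
open Filter Real Topology

/-- Diagonal verification of the strong Feller range condition
`Ran(Q_t^{1/2}) ⊃ Ran(e^{-(νA²-A+a)t})` for the linear stochastic
Kuramoto–Sivashinsky equation: with `λ_j = (2πj/L)²` and
`μ_j = ν λ_j² - λ_j + a > 0`, the quantities
`e^{-μ_j t} λ_j^{-γ} (2μ_j/(1 - e^{-2μ_j t}))^{1/2}` are bounded in `j`. -/
theorem ks_strong_feller_sup_finite (L ν a γ t : ℝ)
    (hL : 0 < L) (hν : 0 < ν) (ha : 1 / (4 * ν) < a) (ht : 0 < t) :
    BddAbove (Set.range (fun j : ℕ =>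
      Real.exp (-(ν * ((2 * Real.pi * (j + 1 : ℝ) / L) ^ 2) ^ 2
            - (2 * Real.pi * (j + 1 : ℝ) / L) ^ 2 + a) * t) *
        ((2 * Real.pi * (j + 1 : ℝ) / L) ^ 2) ^ (-γ) *
        Real.sqrt ((2 * (ν * ((2 * Real.pi * (j + 1 : ℝ) / L) ^ 2) ^ 2
              - (2 * Real.pi * (j + 1 : ℝ) / L) ^ 2 + a)) /
          (1 - Real.exp (-(2 * (ν * ((2 * Real.pi * (j + 1 : ℝ) / L) ^ 2) ^ 2
              - (2 * Real.pi * (j + 1 : ℝ) / L) ^ 2 + a)) * t))))) := by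
  have hπ := Real.pi_pos
  set lam : ℕ → ℝ := fun j => (2 * Real.pi * (j + 1 : ℝ) / L) ^ 2 with hlam
  set mu : ℕ → ℝ := fun j => ν * (lam j) ^ 2 - lam j + a with hmu
  show BddAbove (Set.range (fun j : ℕ =>
    Real.exp (-(mu j) * t) * (lam j) ^ (-γ) *
      Real.sqrt ((2 * mu j) / (1 - Real.exp (-(2 * mu j) * t)))))
  have hlam_pos : ∀ j, 0 < lam j := by
    intro j
    have : 0 < 2 * Real.pi * (j + 1 : ℝ) / L := by positivity
    positivity
  have hmu_lb : ∀ j, a - 1 / (4 * ν) ≤ mu j := by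
    intro j
    have h := mul_nonneg hν.le (sq_nonneg (lam j - 1 / (2 * ν)))
    have expand : ν * (lam j - 1 / (2 * ν)) ^ 2
        = ν * (lam j) ^ 2 - lam j + 1 / (4 * ν) := by
      field_simp; ring
    simp only [hmu]
    linarith [expand ▸ h]
  have hcpos : (0:ℝ) < a - 1 / (4 * ν) := by linarith
  have hmu_pos : ∀ j, 0 < mu j := fun j => lt_of_lt_of_le hcpos (hmu_lb j)
  have hmu_quad : ∀ j, ν / 2 * (lam j) ^ 2 + (a - 1 / (2 * ν)) ≤ mu j := by
    intro j
    have h := mul_nonneg (by positivity : (0:ℝ) ≤ ν / 2) (sq_nonneg (lam j - 1 / ν))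
    have expand : ν / 2 * (lam j - 1 / ν) ^ 2
        = ν / 2 * (lam j) ^ 2 - lam j + 1 / (2 * ν) := by
      field_simp; ring
    simp only [hmu]
    linarith [expand ▸ h]
  -- lam and mu tend to infinity
  have hlam_top : Tendsto lam atTop atTop := by
    apply (tendsto_pow_atTop (two_ne_zero)).comp
    have h1 : Tendsto (fun j : ℕ => (2 * Real.pi / L) * (j + 1 : ℝ)) atTop atTop := by
      apply Tendsto.const_mul_atTop (by positivity)
      exact tendsto_atTop_add_const_right _ 1 tendsto_natCast_atTop_atTop
    refine h1.congr (fun j => by ring)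
  have hmu_top : Tendsto mu atTop atTop := by
    apply tendsto_atTop_mono' atTop (Filter.Eventually.of_forall fun j => hmu_quad j)
    apply tendsto_atTop_add_const_right
    apply Tendsto.const_mul_atTop (by positivity : (0:ℝ) < ν / 2)
    exact (tendsto_pow_atTop two_ne_zero).comp hlam_top
  clear_value lam mu
  -- the three factors
  set h1 : ℕ → ℝ := fun j => Real.sqrt (2 * mu j) * Real.exp (-(t / 2) * mu j) with hh1
  set h2 : ℕ → ℝ := fun j => (lam j) ^ (-γ) * Real.exp (-(t / 2) * mu j) with hh2
  set w : ℕ → ℝ := fun j => Real.sqrt (1 - Real.exp (-(2 * mu j) * t))⁻¹ with hw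
  -- factor 1 tends to 0
  have H1 : Tendsto h1 atTop (𝓝 0) := by
    have base : Tendsto (fun y : ℝ => Real.sqrt (2 * y) * Real.exp (-(t / 2) * y))
        atTop (𝓝 0) := by
      have := (tendsto_rpow_mul_exp_neg_mul_atTop_nhds_zero (1/2) (t/2)
        (by positivity)).const_mul (Real.sqrt 2)
      rw [mul_zero] at this
      refine this.congr' ?_
      filter_upwards [eventually_ge_atTop (0:ℝ)] with y hy
      rw [Real.sqrt_mul (by norm_num) y, ← Real.sqrt_eq_rpow]
      ring
    exact base.comp hmu_top
  -- factor 2 tends to 0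
  have H2 : Tendsto h2 atTop (𝓝 0) := by
    set C : ℝ := Real.exp (-(t / 2) * (a - 1 / (2 * ν))) with hC
    have hbnd : ∀ j, h2 j ≤ C * (((lam j) ^ 2) ^ (-γ / 2) *
        Real.exp (-(ν * t / 4) * (lam j) ^ 2)) := by
      intro j
      have e1 : ((lam j) ^ 2 : ℝ) ^ (-γ / 2) = (lam j) ^ (-γ) := by
        rw [← Real.rpow_natCast (lam j) 2, ← Real.rpow_mul (hlam_pos j).le]
        have : ((2:ℕ):ℝ) * (-γ / 2) = -γ := by push_cast; ring
        rw [this]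
      rw [e1]
      have e2 : Real.exp (-(t / 2) * mu j) ≤
          C * Real.exp (-(ν * t / 4) * (lam j) ^ 2) := by
        rw [hC, ← Real.exp_add]
        apply Real.exp_le_exp.mpr
        nlinarith [mul_le_mul_of_nonneg_left (hmu_quad j) (by positivity : (0:ℝ) ≤ t / 2)]
      calc (lam j) ^ (-γ) * Real.exp (-(t / 2) * mu j)
          ≤ (lam j) ^ (-γ) * (C * Real.exp (-(ν * t / 4) * (lam j) ^ 2)) :=
            mul_le_mul_of_nonneg_left e2 (Real.rpow_nonneg (hlam_pos j).le _)
        _ = C * ((lam j) ^ (-γ) * Real.exp (-(ν * t / 4) * (lam j) ^ 2)) := by ring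
    have hmaj : Tendsto (fun j => C * (((lam j) ^ 2) ^ (-γ / 2) *
        Real.exp (-(ν * t / 4) * (lam j) ^ 2))) atTop (𝓝 0) := by
      have base : Tendsto (fun y : ℝ => y ^ (-γ / 2) * Real.exp (-(ν * t / 4) * y))
          atTop (𝓝 0) :=
        tendsto_rpow_mul_exp_neg_mul_atTop_nhds_zero _ _ (by positivity)
      have comp := base.comp ((tendsto_pow_atTop two_ne_zero).comp hlam_top)
      have := comp.const_mul C
      rwa [mul_zero] at this
    exact squeeze_zero
      (fun j => mul_nonneg (Real.rpow_nonneg (hlam_pos j).le _) (Real.exp_pos _).le)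
      hbnd hmaj
  -- factor 3 tends to 1
  have HW : Tendsto w atTop (𝓝 1) := by
    have hexp : Tendsto (fun j => Real.exp (-(2 * mu j) * t)) atTop (𝓝 0) := by
      have hmt : Tendsto (fun j => (2 * t) * mu j) atTop atTop :=
        Tendsto.const_mul_atTop (by positivity) hmu_top
      have := (Real.tendsto_exp_neg_atTop_nhds_zero).comp hmt
      refine this.congr (fun j => ?_)
      simp only [Function.comp]
      congr 1
      ring
    have hsub : Tendsto (fun j => 1 - Real.exp (-(2 * mu j) * t)) atTop (𝓝 1) := by
      have h : Tendsto (fun j => (1:ℝ) - Real.exp (-(2 * mu j) * t)) atTop (𝓝 (1 - 0)) :=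
        tendsto_const_nhds.sub hexp
      rwa [sub_zero] at h
    have h1m := hsub.inv₀ one_ne_zero
    rw [inv_one] at h1m
    have hfin := (Real.continuous_sqrt.tendsto 1).comp h1m
    rw [Real.sqrt_one] at hfin
    exact hfin
  -- assemble
  have hTend : Tendsto (fun j => h1 j * h2 j * w j) atTop (𝓝 0) := by
    have := (H1.mul H2).mul HW
    simpa using this
  have heq : ∀ j : ℕ, h1 j * h2 j * w j
      = Real.exp (-(mu j) * t) * (lam j) ^ (-γ) *
        Real.sqrt ((2 * mu j) / (1 - Real.exp (-(2 * mu j) * t))) := by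
    intro j
    have hm : (0:ℝ) ≤ 2 * mu j := by linarith [hmu_pos j]
    rw [hh1, hh2, hw]
    beta_reduce
    rw [Real.sqrt_div hm, Real.sqrt_inv]
    have he : Real.exp (-(mu j) * t)
        = Real.exp (-(t / 2) * mu j) * Real.exp (-(t / 2) * mu j) := by
      rw [← Real.exp_add]
      congr 1
      ring
    rw [he]
    ring
  exact (hTend.congr heq).bddAbove_range
end

section
/- Let d ∈ {2,3} and ε > 0. There is a constant C (depending on d and ε) such that for all square-summable a, b : ℤ^d → ℂ^d with a_0 = b_0 = 0, the vectors c_n = ∑_{k∈ℤ^d} (n · a_k) b_{n−k} ∈ ℂ^d (the inner sums converging absolutely) satisfy ∑_{n≠0} |n|^{−(2+d+4ε)} |c_n|² ≤ C (∑_{k} |a_k|²) (∑_{k} |b_k|²). -/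
/-- Euclidean norm of a lattice point `k ∈ ℤ^d`. -/
noncomputable def latticeNorm {d : ℕ} (k : Fin d → ℤ) : ℝ :=
  Real.sqrt (∑ i, ((k i : ℝ)) ^ 2)

lemma latticeNorm_nonneg {d : ℕ} (k : Fin d → ℤ) : 0 ≤ latticeNorm k :=
  Real.sqrt_nonneg _

lemma latticeNorm_zero {d : ℕ} : latticeNorm (0 : Fin d → ℤ) = 0 := by
  simp [latticeNorm]

lemma latticeNorm_sq {d : ℕ} (k : Fin d → ℤ) :
    latticeNorm k ^ 2 = ∑ i, ((k i : ℝ)) ^ 2 :=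
  Real.sq_sqrt (Finset.sum_nonneg fun i _ => sq_nonneg _)

lemma latticeNorm_coord {d : ℕ} (k : Fin d → ℤ) (i : Fin d) :
    |((k i : ℝ))| ≤ latticeNorm k := by
  rw [← Real.sqrt_sq_eq_abs, latticeNorm]
  exact Real.sqrt_le_sqrt (Finset.single_le_sum (fun j _ => sq_nonneg ((k j : ℝ))) (Finset.mem_univ i))

lemma one_le_latticeNorm {d : ℕ} {k : Fin d → ℤ} (hk : k ≠ 0) : 1 ≤ latticeNorm k := by
  obtain ⟨i, hi⟩ : ∃ i, k i ≠ 0 := by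
    by_contra h
    push_neg at h
    exact hk (funext h)
  refine le_trans ?_ (latticeNorm_coord k i)
  have : (1 : ℤ) ≤ |k i| := Int.one_le_abs hi
  calc (1:ℝ) ≤ |(k i : ℤ)| := by exact_mod_cast this
    _ = |((k i : ℝ))| := by push_cast; rfl

lemma summable_one_add_sq_rpow {s : ℝ} (hs : 1 < 2 * s) :
    Summable fun m : ℤ => (1 + (m : ℝ) ^ 2) ^ (-s) := by
  have hmain := Real.summable_abs_int_rpow hs
  have haux : Summable fun m : ℤ => (if m = 0 then (1:ℝ) else 0) := by
    apply summable_of_ne_finset_zero (s := {0})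
    intro m hm
    simp only [Finset.mem_singleton] at hm
    simp [hm]
  refine Summable.of_nonneg_of_le (fun m => Real.rpow_nonneg (by positivity) _)
    (fun m => ?_) (hmain.add haux)
  by_cases hm : m = 0
  · subst hm
    simp [Real.zero_rpow (by linarith : -(2*s) ≠ 0)]
  · have hm2 : (0:ℝ) < (m:ℝ)^2 := by
      have : (m:ℝ) ≠ 0 := Int.cast_ne_zero.2 hm
      positivity
    have h1 : (1 + (m:ℝ)^2) ^ (-s) ≤ ((m:ℝ)^2) ^ (-s) :=
      Real.rpow_le_rpow_of_nonpos hm2 (by linarith) (by linarith)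
    have h2 : ((m:ℝ)^2) ^ (-s) = |(m:ℝ)| ^ (-(2*s)) := by
      rw [← sq_abs, ← Real.rpow_natCast |(m:ℝ)| 2, ← Real.rpow_mul (abs_nonneg _)]
      norm_num
    simp only [hm, if_neg, if_false]
    rw [add_zero]
    calc (1 + (m:ℝ)^2) ^ (-s) ≤ ((m:ℝ)^2) ^ (-s) := h1
      _ = |(m:ℝ)| ^ (-(2*s)) := h2

set_option maxHeartbeats 1000000 in
lemma summable_pi_prod {f : ℤ → ℝ} (hf0 : ∀ m, 0 ≤ f m) (hf : Summable f) (d : ℕ) :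
    Summable fun n : Fin d → ℤ => ∏ i, f (n i) := by
  induction d with
  | zero =>
    haveI : Unique (Fin 0 → ℤ) := Pi.uniqueOfIsEmpty _
    exact .of_finite
  | succ d ih =>
    have h1 : 0 ≤ f := hf0
    have h2 : 0 ≤ (fun n : Fin d → ℤ => ∏ i, f (n i)) := by
      intro n; exact Finset.prod_nonneg fun i _ => hf0 _
    have hprod : Summable fun p : ℤ × (Fin d → ℤ) => f p.1 * ∏ i, f (p.2 i) :=
      Summable.mul_of_nonneg (g := fun n : Fin d → ℤ => ∏ i, f (n i)) hf ih h1 h2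
    rw [← (Fin.consEquiv (fun _ : Fin (d + 1) => ℤ)).summable_iff]
    refine hprod.congr fun p => ?_
    simp [Fin.consEquiv, Fin.prod_univ_succ]

lemma summable_latticeNorm_rpow {d : ℕ} (hd : 0 < d) {q : ℝ} (hq : (d : ℝ) < q) :
    Summable fun n : Fin d → ℤ => latticeNorm n ^ (-q) := by
  have hd0 : (0:ℝ) < (d:ℝ) := by exact_mod_cast hd
  have hq0 : 0 < q := lt_trans hd0 hq
  set s : ℝ := q / (2 * d) with hs_def
  have hs0 : 0 < s := by positivity
  have hs : 1 < 2 * s := by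
    rw [hs_def]
    rw [mul_div_assoc']
    rw [lt_div_iff₀ (by positivity)]
    linarith
  have h1 := summable_one_add_sq_rpow hs
  have h1' : ∀ m : ℤ, 0 ≤ (1 + (m:ℝ)^2) ^ (-s) := fun m => Real.rpow_nonneg (by positivity) _
  have h2 := summable_pi_prod h1' h1 d
  refine Summable.of_nonneg_of_le (fun n => Real.rpow_nonneg (latticeNorm_nonneg n) _)
    (fun n => ?_) (h2.mul_left ((2:ℝ) ^ (q/2)))
  have hRnn : 0 ≤ (2:ℝ) ^ (q/2) * ∏ i, (1 + ((n i : ℝ))^2) ^ (-s) := by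
    apply mul_nonneg (Real.rpow_nonneg (by norm_num) _)
    exact Finset.prod_nonneg fun i _ => h1' _
  by_cases hn : n = 0
  · subst hn
    rw [latticeNorm_zero, Real.zero_rpow (by linarith : -q ≠ 0)]
    exact hRnn
  · set L := latticeNorm n with hL_def
    have hL1 : 1 ≤ L := one_le_latticeNorm hn
    have hL0 : 0 < L := lt_of_lt_of_le one_pos hL1
    set P : ℝ := ∏ i, (1 + ((n i : ℝ))^2) with hP_def
    have hPfac : ∀ i : Fin d, (0:ℝ) < 1 + ((n i : ℝ))^2 := fun i => by positivity
    have hP0 : 0 < P := Finset.prod_pos fun i _ => hPfac i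
    -- each factor ≤ 2 L ^ 2
    have hfac : ∀ i : Fin d, 1 + ((n i : ℝ))^2 ≤ 2 * L^2 := by
      intro i
      have h1 : ((n i : ℝ))^2 ≤ L^2 := by
        rw [← sq_abs]
        exact pow_le_pow_left₀ (abs_nonneg _) (latticeNorm_coord n i) 2
      have h2 : (1:ℝ) ≤ L^2 := by nlinarith
      nlinarith
    have hP_le : P ≤ (2 * L^2) ^ d := by
      calc P ≤ ∏ _i : Fin d, (2 * L^2) :=
            Finset.prod_le_prod (fun i _ => (hPfac i).le) (fun i _ => hfac i)
        _ = (2 * L^2) ^ d := by simp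
    -- raise to power s
    have key : P ^ s ≤ (2:ℝ) ^ (q/2) * L ^ q := by
      have h3 : P ^ s ≤ ((2 * L^2) ^ d) ^ s :=
        Real.rpow_le_rpow hP0.le hP_le hs0.le
      have h4 : ((2 * L^2) ^ d : ℝ) ^ s = (2 * L^2) ^ ((d : ℝ) * s) := by
        rw [← Real.rpow_natCast (2 * L^2) d, ← Real.rpow_mul (by positivity)]
      have h5 : (d : ℝ) * s = q / 2 := by
        rw [hs_def]
        field_simp
      have h6 : (2 * L^2 : ℝ) ^ (q/2) = (2:ℝ) ^ (q/2) * L ^ q := by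
        rw [Real.mul_rpow (by norm_num) (by positivity)]
        congr 1
        rw [← Real.rpow_natCast L 2, ← Real.rpow_mul hL0.le]
        congr 1
        push_cast
        ring
      rw [h4, h5, h6] at h3
      exact h3
    -- conclude
    have hprodP : ∏ i, (1 + ((n i : ℝ))^2) ^ (-s) = P ^ (-s) := by
      rw [hP_def]
      rw [← Real.finset_prod_rpow _ _ (fun i _ => (hPfac i).le)]
    rw [hprodP, Real.rpow_neg hP0.le, Real.rpow_neg hL0.le]
    rw [← one_div, ← one_div, mul_one_div, div_le_div_iff₀ (by positivity) (by positivity)]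
    calc 1 * P ^ s = P ^ s := one_mul _
      _ ≤ (2:ℝ) ^ (q/2) * L ^ q := key

/-- `n`-th Fourier coefficient (up to the factor `i`) of `∇·(u⊗v) = (u·∇)v` for
divergence-free `u`: `c_n = ∑_k (n · a_k) b_{n-k}`. -/
noncomputable def nsBdiv {d : ℕ} (a b : (Fin d → ℤ) → EuclideanSpace ℂ (Fin d))
    (n : Fin d → ℤ) : EuclideanSpace ℂ (Fin d) :=
  ∑' k : Fin d → ℤ, (∑ i, ((n i : ℤ) : ℂ) * a k i) • b (n - k)

/-- The estimate `|A^{-(1/2+d/4+ε)} B(u,v)| ≤ C |u|_H |v|_H` for the Navier–Stokes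
nonlinearity on the `d`-torus (`d = 2, 3`), in Fourier form. -/
theorem nsB_estimate_L2 (d : ℕ) (hd : d = 2 ∨ d = 3) (ε : ℝ) (hε : 0 < ε) :
    ∃ C : ℝ, ∀ a b : (Fin d → ℤ) → EuclideanSpace ℂ (Fin d),
      a 0 = 0 → b 0 = 0 →
      Summable (fun k : Fin d → ℤ => ‖a k‖ ^ 2) →
      Summable (fun k : Fin d → ℤ => ‖b k‖ ^ 2) →
      (∀ n : Fin d → ℤ, Summable (fun k : Fin d → ℤ =>
        ‖(∑ i, ((n i : ℤ) : ℂ) * a k i) • b (n - k)‖)) ∧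
      Summable (fun n : Fin d → ℤ =>
        latticeNorm n ^ (-(2 + (d : ℝ) + 4 * ε)) * ‖nsBdiv a b n‖ ^ 2) ∧
      ∑' n : Fin d → ℤ, latticeNorm n ^ (-(2 + (d : ℝ) + 4 * ε)) * ‖nsBdiv a b n‖ ^ 2 ≤
        C * (∑' k : Fin d → ℤ, ‖a k‖ ^ 2) * (∑' k : Fin d → ℤ, ‖b k‖ ^ 2) := by
  have hd1 : 0 < d := by rcases hd with h | h <;> omega
  have hdR : (0:ℝ) ≤ (d:ℝ) := Nat.cast_nonneg d
  have hq : (d:ℝ) < (d:ℝ) + 4 * ε := by linarith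
  have hSq : Summable fun n : Fin d → ℤ => latticeNorm n ^ (-((d:ℝ) + 4*ε)) :=
    summable_latticeNorm_rpow hd1 hq
  refine ⟨(d:ℝ)^2 * ∑' n : Fin d → ℤ, latticeNorm n ^ (-((d:ℝ) + 4*ε)), ?_⟩
  intro a b _ha0 _hb0 hA hB
  set A := ∑' k : Fin d → ℤ, ‖a k‖^2 with hA_def
  set B := ∑' k : Fin d → ℤ, ‖b k‖^2 with hB_def
  have hA0 : 0 ≤ A := tsum_nonneg fun _ => sq_nonneg _
  have hB0 : 0 ≤ B := tsum_nonneg fun _ => sq_nonneg _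
  have hcoord : ∀ (x : EuclideanSpace ℂ (Fin d)) (i : Fin d), ‖x i‖ ≤ ‖x‖ := by
    intro x i
    rw [EuclideanSpace.norm_eq, ← Real.sqrt_sq (norm_nonneg (x i))]
    exact Real.sqrt_le_sqrt (Finset.single_le_sum (fun j _ => sq_nonneg ‖x j‖) (Finset.mem_univ i))
  have hterm : ∀ n k : Fin d → ℤ,
      ‖(∑ i, ((n i : ℤ) : ℂ) * a k i) • b (n - k)‖ ≤
        ((d:ℝ) * latticeNorm n) * (‖a k‖ * ‖b (n - k)‖) := by
    intro n k
    rw [norm_smul]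
    have h1 : ‖∑ i, ((n i:ℤ):ℂ) * a k i‖ ≤ (d:ℝ) * latticeNorm n * ‖a k‖ := by
      calc ‖∑ i, ((n i:ℤ):ℂ) * a k i‖ ≤ ∑ i, ‖((n i:ℤ):ℂ) * a k i‖ := norm_sum_le _ _
        _ ≤ ∑ _i : Fin d, latticeNorm n * ‖a k‖ := by
            refine Finset.sum_le_sum fun i _ => ?_
            rw [norm_mul]
            have e1 : ‖((n i:ℤ):ℂ)‖ = |((n i : ℤ):ℝ)| := by
              rw [show ((n i:ℤ):ℂ) = (((n i:ℤ):ℝ):ℂ) by push_cast; ring, Complex.norm_real,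
                Real.norm_eq_abs]
            rw [e1]
            exact mul_le_mul (latticeNorm_coord n i) (hcoord (a k) i) (norm_nonneg _)
              (latticeNorm_nonneg n)
        _ = (d:ℝ) * latticeNorm n * ‖a k‖ := by
            rw [Finset.sum_const]
            simp [mul_assoc]
    calc ‖∑ i, ((n i:ℤ):ℂ) * a k i‖ * ‖b (n - k)‖
        ≤ ((d:ℝ) * latticeNorm n * ‖a k‖) * ‖b (n - k)‖ :=
          mul_le_mul_of_nonneg_right h1 (norm_nonneg _)
      _ = ((d:ℝ) * latticeNorm n) * (‖a k‖ * ‖b (n - k)‖) := by ring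
  have hBshift : ∀ n : Fin d → ℤ, Summable fun k : Fin d → ℤ => ‖b (n - k)‖^2 := by
    intro n
    have h := (Equiv.subLeft n).summable_iff.mpr hB
    refine h.congr fun k => ?_
    simp [Equiv.subLeft]
  have hBshift_sum : ∀ n : Fin d → ℤ, ∑' k : Fin d → ℤ, ‖b (n - k)‖^2 = B := by
    intro n
    calc ∑' k : Fin d → ℤ, ‖b (n - k)‖^2
        = ∑' k : Fin d → ℤ, ‖b (Equiv.subLeft n k)‖^2 :=
          tsum_congr fun k => by simp [Equiv.subLeft]
      _ = B := (Equiv.subLeft n).tsum_eq (fun k => ‖b k‖^2)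
  have hprod : ∀ n : Fin d → ℤ, Summable fun k : Fin d → ℤ => ‖a k‖ * ‖b (n - k)‖ := by
    intro n
    have hg : Summable (fun k : Fin d → ℤ => (‖a k‖^2 + ‖b (n - k)‖^2)/2) :=
      (hA.add (hBshift n)).div_const 2
    refine Summable.of_nonneg_of_le (g := fun k : Fin d → ℤ => ‖a k‖ * ‖b (n - k)‖)
      (f := fun k : Fin d → ℤ => (‖a k‖^2 + ‖b (n - k)‖^2)/2)
      (fun k => mul_nonneg (norm_nonneg _) (norm_nonneg _)) (fun k => ?_) hg
    nlinarith [sq_nonneg (‖a k‖ - ‖b (n - k)‖)]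
  have hns : ∀ n : Fin d → ℤ, Summable (fun k : Fin d → ℤ =>
      ‖(∑ i, ((n i : ℤ) : ℂ) * a k i) • b (n - k)‖) := by
    intro n
    have hg : Summable (fun k : Fin d → ℤ => ((d:ℝ) * latticeNorm n) * (‖a k‖ * ‖b (n - k)‖)) :=
      (hprod n).mul_left ((d:ℝ) * latticeNorm n)
    exact Summable.of_nonneg_of_le
      (g := fun k : Fin d → ℤ => ‖(∑ i, ((n i : ℤ) : ℂ) * a k i) • b (n - k)‖)
      (f := fun k : Fin d → ℤ => ((d:ℝ) * latticeNorm n) * (‖a k‖ * ‖b (n - k)‖))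
      (fun k => norm_nonneg _) (hterm n) hg
  have hCS : ∀ n : Fin d → ℤ, ∑' k : Fin d → ℤ, ‖a k‖ * ‖b (n - k)‖ ≤
      Real.sqrt A * Real.sqrt B := by
    intro n
    refine Summable.tsum_le_of_sum_le (hprod n) fun s => ?_
    have h1 : (∑ k ∈ s, ‖a k‖ * ‖b (n - k)‖)^2 ≤
        (∑ k ∈ s, ‖a k‖^2) * (∑ k ∈ s, ‖b (n - k)‖^2) :=
      Finset.sum_mul_sq_le_sq_mul_sq s _ _
    have h2 : ∑ k ∈ s, ‖a k‖^2 ≤ A := Summable.sum_le_tsum s (fun k _ => sq_nonneg _) hA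
    have h3 : ∑ k ∈ s, ‖b (n - k)‖^2 ≤ B := by
      have := Summable.sum_le_tsum s (fun k _ => sq_nonneg _) (hBshift n)
      rwa [hBshift_sum n] at this
    have h4 : (∑ k ∈ s, ‖a k‖ * ‖b (n - k)‖)^2 ≤ A * B :=
      h1.trans (mul_le_mul h2 h3 (Finset.sum_nonneg fun k _ => sq_nonneg _) hA0)
    have h5 : 0 ≤ ∑ k ∈ s, ‖a k‖ * ‖b (n - k)‖ :=
      Finset.sum_nonneg fun k _ => mul_nonneg (norm_nonneg _) (norm_nonneg _)
    calc ∑ k ∈ s, ‖a k‖ * ‖b (n - k)‖ ≤ Real.sqrt (A * B) := by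
          rw [← Real.sqrt_sq h5]; exact Real.sqrt_le_sqrt h4
      _ = Real.sqrt A * Real.sqrt B := Real.sqrt_mul hA0 _
  have hc : ∀ n : Fin d → ℤ, ‖nsBdiv a b n‖ ≤
      ((d:ℝ) * latticeNorm n) * (Real.sqrt A * Real.sqrt B) := by
    intro n
    calc ‖nsBdiv a b n‖ ≤ ∑' k : Fin d → ℤ, ‖(∑ i, ((n i:ℤ):ℂ) * a k i) • b (n - k)‖ :=
          norm_tsum_le_tsum_norm (hns n)
      _ ≤ ∑' k : Fin d → ℤ, ((d:ℝ) * latticeNorm n) * (‖a k‖ * ‖b (n - k)‖) :=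
          Summable.tsum_le_tsum (hterm n) (hns n) ((hprod n).mul_left _)
      _ = ((d:ℝ) * latticeNorm n) * ∑' k : Fin d → ℤ, ‖a k‖ * ‖b (n - k)‖ := tsum_mul_left
      _ ≤ ((d:ℝ) * latticeNorm n) * (Real.sqrt A * Real.sqrt B) :=
          mul_le_mul_of_nonneg_left (hCS n)
            (mul_nonneg hdR (latticeNorm_nonneg n))
  have hw : ∀ n : Fin d → ℤ,
      latticeNorm n ^ (-(2 + (d:ℝ) + 4*ε)) * ‖nsBdiv a b n‖^2 ≤
        ((d:ℝ)^2 * A * B) * latticeNorm n ^ (-((d:ℝ) + 4*ε)) := by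
    intro n
    by_cases hn : n = 0
    · subst hn
      rw [latticeNorm_zero, Real.zero_rpow (by linarith : -(2 + (d:ℝ) + 4*ε) ≠ 0),
        Real.zero_rpow (by linarith : -((d:ℝ) + 4*ε) ≠ 0)]
      simp
    · have hL0 : 0 < latticeNorm n := lt_of_lt_of_le one_pos (one_le_latticeNorm hn)
      have h1 : ‖nsBdiv a b n‖^2 ≤ ((d:ℝ) * latticeNorm n)^2 * (A*B) := by
        calc ‖nsBdiv a b n‖^2 ≤ (((d:ℝ) * latticeNorm n) * (Real.sqrt A * Real.sqrt B))^2 :=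
              pow_le_pow_left₀ (norm_nonneg _) (hc n) 2
          _ = ((d:ℝ) * latticeNorm n)^2 * (A*B) := by
              rw [mul_pow, mul_pow, mul_pow, Real.sq_sqrt hA0, Real.sq_sqrt hB0]
      calc latticeNorm n ^ (-(2 + (d:ℝ) + 4*ε)) * ‖nsBdiv a b n‖^2
          ≤ latticeNorm n ^ (-(2 + (d:ℝ) + 4*ε)) * (((d:ℝ) * latticeNorm n)^2 * (A*B)) :=
            mul_le_mul_of_nonneg_left h1 (Real.rpow_nonneg hL0.le _)
        _ = ((d:ℝ)^2 * A * B) *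
            (latticeNorm n ^ (-(2 + (d:ℝ) + 4*ε)) * latticeNorm n ^ (2:ℕ)) := by ring
        _ = ((d:ℝ)^2 * A * B) * latticeNorm n ^ (-((d:ℝ) + 4*ε)) := by
            congr 1
            rw [← Real.rpow_natCast (latticeNorm n) 2, ← Real.rpow_add hL0]
            congr 1
            push_cast
            ring
  have hwsum : Summable (fun n : Fin d → ℤ =>
      latticeNorm n ^ (-(2 + (d:ℝ) + 4*ε)) * ‖nsBdiv a b n‖^2) :=
    Summable.of_nonneg_of_le
      (g := fun n : Fin d → ℤ => latticeNorm n ^ (-(2 + (d:ℝ) + 4*ε)) * ‖nsBdiv a b n‖^2)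
      (f := fun n : Fin d → ℤ => ((d:ℝ)^2 * A * B) * latticeNorm n ^ (-((d:ℝ) + 4*ε)))
      (fun n => mul_nonneg (Real.rpow_nonneg (latticeNorm_nonneg n) _) (sq_nonneg _))
      hw (hSq.mul_left ((d:ℝ)^2 * A * B))
  refine ⟨hns, hwsum, ?_⟩
  calc ∑' n : Fin d → ℤ, latticeNorm n ^ (-(2 + (d:ℝ) + 4*ε)) * ‖nsBdiv a b n‖^2
      ≤ ∑' n : Fin d → ℤ, ((d:ℝ)^2 * A * B) * latticeNorm n ^ (-((d:ℝ) + 4*ε)) :=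
        Summable.tsum_le_tsum hw hwsum (hSq.mul_left ((d:ℝ)^2 * A * B))
    _ = ((d:ℝ)^2 * A * B) * ∑' n : Fin d → ℤ, latticeNorm n ^ (-((d:ℝ) + 4*ε)) := tsum_mul_left
    _ = (d:ℝ)^2 * (∑' n : Fin d → ℤ, latticeNorm n ^ (-((d:ℝ) + 4*ε))) * A * B := by ring
end
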